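/- arXiv:2403.16622 — 7 statements merged into one kernel-verified Lean document; each statement's English description precedes it below -/
import Mathlib

section
/- Let e and e' be two feasible schedules with the same total energy delivered per job, and suppose for some intervals i, i' the schedule e' is obtained from e by moving an amount δ > 0 of charge of one job j from interval i to interval i' (both available to j), so that the resulting powers are p'_i = p_i − δ/L_i, p'_{i'} = p_{i'} + δ/L_{i'} and p'_k = p_k otherwise. If p_i > p_{i'} and 0 < δ ≤ L_i·L_{i'}·(p_i − p_{i'})/(L_i + L_{i'}), then Σ_k L_k p'_k² < Σ_k L_k p_k². -/
/-- Local exchange: moving `δ` of charge from a higher-power interval `i` to a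
lower-power interval `i'` strictly decreases the weighted quadratic cost, provided
`0 < δ ≤ L i * L i' * (p i - p i') / (L i + L i')`. -/
theorem local_exchange_strict_decrease (m : ℕ) (L p : Fin m → ℝ)
    (hL : ∀ k, 0 < L k) (i i' : Fin m) (hne : i ≠ i')
    (hpp : p i' < p i) (δ : ℝ) (hδ0 : 0 < δ)
    (hδ : δ ≤ L i * L i' * (p i - p i') / (L i + L i')) :
    ∑ k, L k * (Function.update (Function.update p i (p i - δ / L i)) i'
        (p i' + δ / L i') k) ^ 2 < ∑ k, L k * p k ^ 2 := by
  have hLi := hL i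
  have hLi' := hL i'
  set a : ℝ := p i - δ / L i with ha
  set b : ℝ := p i' + δ / L i' with hb
  set q : Fin m → ℝ := Function.update (Function.update p i a) i' b with hq
  have hmem : i ∈ Finset.univ.erase i' := Finset.mem_erase.2 ⟨hne, Finset.mem_univ i⟩
  have hsum : ∀ f : Fin m → ℝ,
      ∑ k, L k * f k ^ 2 = L i' * f i' ^ 2 + L i * f i ^ 2 +
        ∑ k ∈ (Finset.univ.erase i').erase i, L k * f k ^ 2 := by
    intro f
    rw [← Finset.add_sum_erase _ _ (Finset.mem_univ i'), ← Finset.add_sum_erase _ _ hmem]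
    ring
  rw [hsum q, hsum p]
  have hrest : ∑ k ∈ (Finset.univ.erase i').erase i, L k * q k ^ 2 =
      ∑ k ∈ (Finset.univ.erase i').erase i, L k * p k ^ 2 := by
    refine Finset.sum_congr rfl fun k hk => ?_
    simp only [Finset.mem_erase] at hk
    simp [hq, Function.update_of_ne hk.1, Function.update_of_ne hk.2.1]
  rw [hrest]
  have hqi' : q i' = b := by simp [hq]
  have hqi : q i = a := by
    rw [hq, Function.update_of_ne hne, Function.update_self]
  rw [hqi, hqi']
  clear_value a b q
  have hkey : δ * (L i + L i') ≤ L i * L i' * (p i - p i') := by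
    have hpos : 0 < L i + L i' := by linarith
    rw [div_eq_mul_inv] at hδ
    calc δ * (L i + L i') ≤ L i * L i' * (p i - p i') * (L i + L i')⁻¹ * (L i + L i') := by
          exact mul_le_mul_of_nonneg_right hδ hpos.le
      _ = L i * L i' * (p i - p i') := by field_simp
  have expand : L i' * b ^ 2 + L i * a ^ 2 =
      L i' * p i' ^ 2 + L i * p i ^ 2 + (δ ^ 2 / L i + δ ^ 2 / L i' - 2 * δ * (p i - p i')) := by
    rw [ha, hb]
    field_simp
    ring
  have hlt : δ ^ 2 / L i + δ ^ 2 / L i' - 2 * δ * (p i - p i') < 0 := by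
    rw [div_add_div _ _ (ne_of_gt hLi) (ne_of_gt hLi'), sub_neg, div_lt_iff₀ (by positivity)]
    have h1 : δ ^ 2 * L i' + L i * δ ^ 2 = δ * (δ * (L i + L i')) := by ring
    rw [h1]
    calc δ * (δ * (L i + L i')) ≤ δ * (L i * L i' * (p i - p i')) :=
          mul_le_mul_of_nonneg_left hkey hδ0.le
      _ < 2 * δ * (p i - p i') * (L i * L i') := by nlinarith [mul_pos (mul_pos hδ0 (sub_pos.2 hpp)) (mul_pos hLi hLi')]
  linarith [hlt, expand.le, expand.ge]
end

section
/- (Flattening lemma) If (p_1,…,p_m) is the power vector of an optimal schedule for F(p) = Σ_i L_i p_i², and there exist intervals i, i' such that p_i > p_{i'} and some job j available in both intervals has e_{i,j} > 0 and e_{i',j} < e_{i',j}^max, then the schedule is not optimal. Equivalently: in an optimal schedule, whenever p_i > p_{i'}, every job available in both intervals either charges nothing in i or charges at its maximum in i'. -/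
/-- A schedule is feasible if it is nonnegative, charges only in available
intervals, respects the per-interval power caps, and meets all demands. -/
def Feasible (n m : ℕ) (A : Fin n → Fin m → Bool) (L : Fin m → ℝ)
    (pmax e : Fin n → ℝ) (E : Fin m → Fin n → ℝ) : Prop :=
  (∀ i j, 0 ≤ E i j) ∧ (∀ i j, A j i = false → E i j = 0) ∧
  (∀ i j, E i j ≤ pmax j * L i) ∧ (∀ j, e j ≤ ∑ i, E i j)

/-- Aggregated power in interval `i`. -/
noncomputable def power (n m : ℕ) (L : Fin m → ℝ) (E : Fin m → Fin n → ℝ) (i : Fin m) : ℝ :=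
  (∑ j, E i j) / L i

/-- Weighted quadratic objective. -/
noncomputable def objF (n m : ℕ) (L : Fin m → ℝ) (E : Fin m → Fin n → ℝ) : ℝ :=
  ∑ i, L i * (power n m L E i) ^ 2

/-- Flattening lemma: in an optimal schedule, whenever `p i > p i'`, every job
available in both intervals charges nothing in `i` or at its maximum in `i'`. -/
theorem flattening_lemma (n m : ℕ) (A : Fin n → Fin m → Bool) (L : Fin m → ℝ)
    (pmax e : Fin n → ℝ) (hL : ∀ i, 0 < L i) (hp : ∀ j, 0 < pmax j)
    (he : ∀ j, 0 ≤ e j)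
    (E : Fin m → Fin n → ℝ) (hE : Feasible n m A L pmax e E)
    (hopt : ∀ E', Feasible n m A L pmax e E' → objF n m L E ≤ objF n m L E')
    (i i' : Fin m) (hpi : power n m L E i' < power n m L E i)
    (j : Fin n) (hji : A j i = true) (hji' : A j i' = true) :
    E i j = 0 ∨ E i' j = pmax j * L i' := by
  by_contra hcon
  push_neg at hcon
  obtain ⟨h1, h2⟩ := hcon
  obtain ⟨hnn, hav, hcap, hdem⟩ := hE
  have hEij : 0 < E i j := lt_of_le_of_ne (hnn i j) (Ne.symm h1)
  have hEi'j : E i' j < pmax j * L i' := lt_of_le_of_ne (hcap i' j) h2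
  have hii' : i ≠ i' := by rintro rfl; exact lt_irrefl _ hpi
  set p := power n m L E with hpdef
  set g := p i - p i' with hg
  have hgpos : 0 < g := sub_pos.mpr hpi
  have hLi := hL i
  have hLi' := hL i'
  have hden : 0 < 1 / L i + 1 / L i' := by positivity
  set ε := min (min (E i j) (pmax j * L i' - E i' j)) (g / (1 / L i + 1 / L i')) with hεdef
  have hεpos : 0 < ε :=
    lt_min (lt_min hEij (sub_pos.mpr hEi'j)) (div_pos hgpos hden)
  have hε1 : ε ≤ E i j := le_trans (min_le_left _ _) (min_le_left _ _)
  have hε2 : ε ≤ pmax j * L i' - E i' j := le_trans (min_le_left _ _) (min_le_right _ _)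
  have hε3 : ε * (1 / L i + 1 / L i') ≤ g := by
    have := min_le_right (min (E i j) (pmax j * L i' - E i' j)) (g / (1 / L i + 1 / L i'))
    rw [← hεdef] at this
    exact (le_div_iff₀ hden).mp this
  set E' : Fin m → Fin n → ℝ := fun a b =>
    if a = i ∧ b = j then E i j - ε
    else if a = i' ∧ b = j then E i' j + ε else E a b with hE'def
  have hii'' : i' ≠ i := Ne.symm hii'
  -- pointwise description of E'
  have hE'val : ∀ a b, E' a b = E a b +
      ((if a = i ∧ b = j then -ε else 0) + (if a = i' ∧ b = j then ε else 0)) := by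
    intro a b
    simp only [hE'def]
    by_cases h1' : a = i ∧ b = j
    · have h2' : ¬(a = i' ∧ b = j) := by
        rintro ⟨ha, -⟩; exact hii'' (ha ▸ h1'.1.symm ▸ rfl)
      rw [if_pos h1', if_pos h1', if_neg h2', h1'.1, h1'.2]; ring
    · by_cases h2' : a = i' ∧ b = j
      · rw [if_neg h1', if_neg h1', if_pos h2', if_pos h2', h2'.1, h2'.2]; ring
      · rw [if_neg h1', if_neg h1', if_neg h2', if_neg h2']; ring
  -- row sums
  have hrow : ∀ a, ∑ b, E' a b =
      (∑ b, E a b) + (if a = i then -ε else if a = i' then ε else 0) := by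
    intro a
    rw [Finset.sum_congr rfl (fun b _ => hE'val a b), Finset.sum_add_distrib,
      Finset.sum_add_distrib]
    congr 1
    by_cases hai : a = i
    · have : a ≠ i' := fun h => hii' (hai ▸ h ▸ rfl)
      simp [hai, this, hii', Finset.sum_ite_eq']
    · by_cases hai' : a = i'
      · simp [hai, hai', hii'', Finset.sum_ite_eq']
      · simp [hai, hai']
  -- feasibility of E'
  have hfeas : Feasible n m A L pmax e E' := by
    refine ⟨?_, ?_, ?_, ?_⟩
    · intro a b
      rw [hE'val a b]
      by_cases h1' : a = i ∧ b = j
      · have h2' : ¬(a = i' ∧ b = j) := by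
          rintro ⟨ha, -⟩; exact hii'' (ha ▸ h1'.1.symm ▸ rfl)
        rw [if_pos h1', if_neg h2', h1'.1, h1'.2]; linarith
      · by_cases h2' : a = i' ∧ b = j
        · rw [if_neg h1', if_pos h2', h2'.1, h2'.2]
          have := hnn i' j; linarith
        · rw [if_neg h1', if_neg h2']
          have := hnn a b; linarith
    · intro a b hab
      rw [hE'val a b]
      by_cases h1' : a = i ∧ b = j
      · rw [h1'.1, h1'.2, hji] at hab; exact absurd hab (by simp)
      · by_cases h2' : a = i' ∧ b = j
        · rw [h2'.1, h2'.2, hji'] at hab; exact absurd hab (by simp)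
        · rw [if_neg h1', if_neg h2', hav a b hab]; ring
    · intro a b
      rw [hE'val a b]
      by_cases h1' : a = i ∧ b = j
      · have h2' : ¬(a = i' ∧ b = j) := by
          rintro ⟨ha, -⟩; exact hii'' (ha ▸ h1'.1.symm ▸ rfl)
        rw [if_pos h1', if_neg h2', h1'.1, h1'.2]
        have := hcap i j; linarith
      · by_cases h2' : a = i' ∧ b = j
        · rw [if_neg h1', if_pos h2', h2'.1, h2'.2]; linarith
        · rw [if_neg h1', if_neg h2']
          have := hcap a b; linarith
    · intro b
      have hsum : ∑ a, E' a b = ∑ a, E a b := by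
        rw [Finset.sum_congr rfl (fun a _ => hE'val a b), Finset.sum_add_distrib,
          Finset.sum_add_distrib]
        by_cases hbj : b = j
        · subst hbj
          simp [Finset.sum_ite_eq']
        · simp [hbj]
      rw [hsum]; exact hdem b
  -- objective strictly decreases
  have hpow : ∀ a, power n m L E' a =
      p a + (if a = i then -ε else if a = i' then ε else 0) / L a := by
    intro a
    rw [power, hrow a, hpdef, power, add_div]
  have hterm : ∀ a, L a * (power n m L E' a) ^ 2 =
      L a * (p a) ^ 2 +
      (if a = i then -2 * ε * p i + ε ^ 2 / L i
       else if a = i' then 2 * ε * p i' + ε ^ 2 / L i' else 0) := by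
    intro a
    rw [hpow a]
    by_cases hai : a = i
    · subst hai
      simp only [if_pos rfl, ↓reduceIte]
      field_simp
      ring
    · by_cases hai' : a = i'
      · subst hai'
        simp only [if_neg hai, if_pos rfl, ↓reduceIte]
        field_simp
        ring
      · simp only [if_neg hai, if_neg hai']
        rw [zero_div, add_zero, add_zero]
  have hobj : objF n m L E' = objF n m L E +
      ((-2 * ε * p i + ε ^ 2 / L i) + (2 * ε * p i' + ε ^ 2 / L i')) := by
    rw [objF, objF]
    have heq : ∀ a, (if a = i then -2 * ε * p i + ε ^ 2 / L i
       else if a = i' then 2 * ε * p i' + ε ^ 2 / L i' else 0) =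
       (if a = i then -2 * ε * p i + ε ^ 2 / L i else 0) +
       (if a = i' then 2 * ε * p i' + ε ^ 2 / L i' else 0) := by
      intro a
      by_cases hai : a = i
      · subst hai; simp [hii']
      · simp [hai]
    calc ∑ a, L a * (power n m L E' a) ^ 2
        = ∑ a, (L a * (p a) ^ 2 +
          ((if a = i then -2 * ε * p i + ε ^ 2 / L i else 0) +
           (if a = i' then 2 * ε * p i' + ε ^ 2 / L i' else 0))) := by
          apply Finset.sum_congr rfl
          intro a _
          rw [hterm a, heq a]
      _ = _ := by
          rw [Finset.sum_add_distrib, Finset.sum_add_distrib,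
            Finset.sum_ite_eq' Finset.univ i, Finset.sum_ite_eq' Finset.univ i']
          simp [add_assoc]
          rfl
  have hlt : objF n m L E' < objF n m L E := by
    rw [hobj]
    have key : (-2 * ε * p i + ε ^ 2 / L i) + (2 * ε * p i' + ε ^ 2 / L i') < 0 := by
      have h4 : ε ^ 2 / L i + ε ^ 2 / L i' = ε * (ε * (1 / L i + 1 / L i')) := by
        field_simp
      have h5 : ε * (ε * (1 / L i + 1 / L i')) ≤ ε * g :=
        mul_le_mul_of_nonneg_left hε3 hεpos.le
      have h6 : -2 * ε * p i + 2 * ε * p i' = -2 * ε * g := by rw [hg]; ring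
      nlinarith [mul_pos hεpos hgpos]
    linarith
  exact absurd (hopt E' hfeas) (not_le.mpr hlt)
end

section
/- (Paraphrase of Lemma 2 of FOCS) Let I_i be a critical interval, i.e., an interval attaining the maximum aggregated power p_i = max_k p_k in an optimal schedule, and let I_{i'} be any interval with p_{i'} < p_i. Then no positive amount of scheduled charge can be feasibly moved from I_i to I_{i'}: for every job j available in both I_i and I_{i'} with e_{i,j} > 0, we must have e_{i',j} = e_{i',j}^max. -/
theorem sum_mul_sq_sub_single_add_single {ι : Type*} [Fintype ι] [DecidableEq ι]
    (w f : ι → ℝ) {i i' : ι} (h : i ≠ i') (a b : ℝ) :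
    ∑ k, w k * (f - Pi.single i a + Pi.single i' b : ι → ℝ) k ^ 2 =
      ∑ k, w k * f k ^ 2 +
        (w i * ((f i - a) ^ 2 - f i ^ 2) + w i' * ((f i' + b) ^ 2 - f i' ^ 2)) := by
  rw [← sub_eq_iff_eq_add', ← Finset.sum_sub_distrib]
  have hterm : ∀ k, w k * (f - Pi.single i a + Pi.single i' b : ι → ℝ) k ^ 2 - w k * f k ^ 2 =
      (Pi.single i (w i * ((f i - a) ^ 2 - f i ^ 2)) : ι → ℝ) k +
        (Pi.single i' (w i' * ((f i' + b) ^ 2 - f i' ^ 2)) : ι → ℝ) k := by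
    intro k
    rcases eq_or_ne k i with rfl | hki
    · simp [h]
      ring
    rcases eq_or_ne k i' with rfl | hki'
    · simp [hki]
      ring
    · simp [hki, hki']
  simp only [hterm, Finset.sum_add_distrib, Finset.sum_pi_single', Finset.mem_univ, if_true]

section MoveCharge

variable {n m : ℕ}

def moveCharge (E : Fin m → Fin n → ℝ) (j : Fin n) (i i' : Fin m) (ε : ℝ) : Fin m → Fin n → ℝ :=
  E - Pi.single i (Pi.single j ε) + Pi.single i' (Pi.single j ε)

theorem moveCharge_apply (E : Fin m → Fin n → ℝ) (j : Fin n) (i i' : Fin m) (ε : ℝ) (k : Fin m)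
    (l : Fin n) :
    moveCharge E j i i' ε k l =
      E k l - (if k = i ∧ l = j then ε else 0) + (if k = i' ∧ l = j then ε else 0) := by
  simp only [moveCharge, Pi.add_apply, Pi.sub_apply, Pi.single_apply]
  split_ifs <;> simp_all

theorem sum_moveCharge_row (E : Fin m → Fin n → ℝ) (j : Fin n) (i i' : Fin m) (ε : ℝ) (k : Fin m) :
    ∑ l, moveCharge E j i i' ε k l =
      ∑ l, E k l - (Pi.single i ε : Fin m → ℝ) k + (Pi.single i' ε : Fin m → ℝ) k := by
  have hsingle : ∀ i₀ : Fin m,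
      ∑ l, (Pi.single i₀ (Pi.single j ε : Fin n → ℝ) : Fin m → Fin n → ℝ) k l =
        (Pi.single i₀ ε : Fin m → ℝ) k := by
    intro i₀
    rcases eq_or_ne k i₀ with rfl | hk
    · simp
    · simp [hk]
  simp only [moveCharge, Pi.add_apply, Pi.sub_apply, Finset.sum_add_distrib, Finset.sum_sub_distrib,
    hsingle]

theorem sum_moveCharge_col (E : Fin m → Fin n → ℝ) (j : Fin n) (i i' : Fin m) (ε : ℝ) (l : Fin n) :
    ∑ k, moveCharge E j i i' ε k l = ∑ k, E k l := by
  have hsingle : ∀ i₀ : Fin m,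
      ∑ k, (Pi.single i₀ (Pi.single j ε : Fin n → ℝ) : Fin m → Fin n → ℝ) k l =
        (Pi.single j ε : Fin n → ℝ) l := by
    intro i₀
    rw [← Finset.sum_apply, Finset.sum_pi_single']
    simp
  simp only [moveCharge, Pi.add_apply, Pi.sub_apply, Finset.sum_add_distrib, Finset.sum_sub_distrib,
    hsingle, sub_add_cancel]

theorem power_moveCharge (L : Fin m → ℝ) (E : Fin m → Fin n → ℝ) (j : Fin n) (i i' : Fin m)
    (ε : ℝ) :
    power n m L (moveCharge E j i i' ε) =
      power n m L E - (Pi.single i (ε / L i) : Fin m → ℝ) + Pi.single i' (ε / L i') := by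
  funext k
  rcases eq_or_ne k i with rfl | hki <;> rcases eq_or_ne k i' with rfl | hki' <;>
    simp [power, sum_moveCharge_row, *, add_div, sub_div]

theorem objF_moveCharge {L : Fin m → ℝ} (hL : ∀ k, L k ≠ 0) (E : Fin m → Fin n → ℝ) (j : Fin n)
    {i i' : Fin m} (hii' : i ≠ i') (ε : ℝ) :
    objF n m L (moveCharge E j i i' ε) = objF n m L E -
      ε * (2 * (power n m L E i - power n m L E i') - ε * (1 / L i + 1 / L i')) := by
  rw [objF, power_moveCharge, sum_mul_sq_sub_single_add_single _ _ hii', ← objF]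
  field_simp [hL i, hL i']
  ring

theorem Feasible.moveCharge {A : Fin n → Fin m → Bool} {L : Fin m → ℝ} {pmax e : Fin n → ℝ}
    {E : Fin m → Fin n → ℝ} (hE : Feasible n m A L pmax e E) {j : Fin n} {i i' : Fin m} {ε : ℝ}
    (hAi : A j i = true) (hAi' : A j i' = true) (hε : 0 ≤ ε) (hεE : ε ≤ E i j)
    (hcap : E i' j + ε ≤ pmax j * L i') :
    Feasible n m A L pmax e (_root_.moveCharge E j i i' ε) := by
  obtain ⟨hnonneg, havail, hle, hdemand⟩ := hE
  refine ⟨fun k l => ?_, fun k l hA => ?_, fun k l => ?_, fun l => ?_⟩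
  · rw [moveCharge_apply]
    by_cases h : k = i ∧ l = j
    · obtain ⟨rfl, rfl⟩ := h
      split_ifs <;> linarith
    · rw [if_neg h]
      split_ifs <;> linarith [hnonneg k l]
  · have hi : ¬ (k = i ∧ l = j) := by rintro ⟨rfl, rfl⟩; simp_all
    have hi' : ¬ (k = i' ∧ l = j) := by rintro ⟨rfl, rfl⟩; simp_all
    rw [moveCharge_apply, if_neg hi, if_neg hi', havail k l hA]
    ring
  · rw [moveCharge_apply]
    by_cases h' : k = i' ∧ l = j
    · obtain ⟨rfl, rfl⟩ := h'
      split_ifs <;> linarith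
    · rw [if_neg h']
      split_ifs <;> linarith [hle k l]
  · rw [sum_moveCharge_col]
    exact hdemand l

end MoveCharge

theorem exists_feasible_objF_lt_of_move {n m : ℕ} {A : Fin n → Fin m → Bool} {L : Fin m → ℝ}
    {pmax e : Fin n → ℝ} (hL : ∀ i, 0 < L i) {E : Fin m → Fin n → ℝ}
    (hE : Feasible n m A L pmax e E) {i i' : Fin m}
    (hlt : power n m L E i' < power n m L E i) {δ : ℝ} {j : Fin n} (hδ : 0 < δ)
    (hAi : A j i = true) (hAi' : A j i' = true) (hδE : δ ≤ E i j)
    (hcap : E i' j + δ ≤ pmax j * L i') :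
    ∃ E', Feasible n m A L pmax e E' ∧ objF n m L E' < objF n m L E := by
  have hii' : i ≠ i' := by rintro rfl; exact hlt.false
  set gap := power n m L E i - power n m L E i'
  set c := 1 / L i + 1 / L i'
  have hc : 0 < c := by have := hL i; have := hL i'; positivity
  -- `ε ≤ gap / c` makes the second-order term at most half the first-order gain
  set ε := min δ (gap / c)
  have hε : 0 < ε := lt_min hδ (div_pos (sub_pos.2 hlt) hc)
  have hεδ : ε ≤ δ := min_le_left _ _
  have hεc : ε * c ≤ gap := (le_div_iff₀ hc).1 (min_le_right _ _)
  refine ⟨moveCharge E j i i' ε, hE.moveCharge hAi hAi' hε.le (hεδ.trans hδE) (by linarith), ?_⟩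
  rw [objF_moveCharge (fun k => (hL k).ne') E j hii']
  have : 0 < ε * (2 * gap - ε * c) := mul_pos hε (by linarith [sub_pos.2 hlt])
  linarith

theorem no_move_from_critical_general (n m : ℕ) (A : Fin n → Fin m → Bool) (L : Fin m → ℝ)
    (pmax e : Fin n → ℝ) (hL : ∀ i, 0 < L i)
    (E : Fin m → Fin n → ℝ) (hE : Feasible n m A L pmax e E)
    (hopt : ∀ E', Feasible n m A L pmax e E' → objF n m L E ≤ objF n m L E')
    (i : Fin m)
    (i' : Fin m) (hlt : power n m L E i' < power n m L E i) :
    (¬ ∃ δ : ℝ, ∃ j : Fin n, 0 < δ ∧ A j i = true ∧ A j i' = true ∧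
        δ ≤ E i j ∧ E i' j + δ ≤ pmax j * L i') ∧
    (∀ j : Fin n, A j i = true → A j i' = true → 0 < E i j →
        E i' j = pmax j * L i') := by
  have hno_move : ¬ ∃ δ : ℝ, ∃ j : Fin n, 0 < δ ∧ A j i = true ∧ A j i' = true ∧
      δ ≤ E i j ∧ E i' j + δ ≤ pmax j * L i' := by
    rintro ⟨δ, j, hδ, hAi, hAi', hδE, hcap⟩
    obtain ⟨E', hE', hobj⟩ := exists_feasible_objF_lt_of_move hL hE hlt hδ hAi hAi' hδE hcap
    exact (hopt E' hE').not_gt hobj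
  refine ⟨hno_move, fun j hAi hAi' hpos => ?_⟩
  by_contra hne
  have hroom : 0 < pmax j * L i' - E i' j := sub_pos.2 ((hE.2.2.1 i' j).lt_of_ne hne)
  exact hno_move ⟨min (E i j) (pmax j * L i' - E i' j), j, lt_min hpos hroom, hAi, hAi',
    min_le_left _ _, by linarith [min_le_right (E i j) (pmax j * L i' - E i' j)]⟩

/-- Lemma 2 of FOCS: no positive charge can be feasibly moved from a critical
interval `i` to a strictly lower-power interval `i'`; in particular any job with
positive charge in `i` available in `i'` is at its cap in `i'`. -/
theorem no_move_from_critical (n m : ℕ) (A : Fin n → Fin m → Bool) (L : Fin m → ℝ)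
    (pmax e : Fin n → ℝ) (hL : ∀ i, 0 < L i) (hp : ∀ j, 0 < pmax j)
    (he : ∀ j, 0 ≤ e j)
    (E : Fin m → Fin n → ℝ) (hE : Feasible n m A L pmax e E)
    (hopt : ∀ E', Feasible n m A L pmax e E' → objF n m L E ≤ objF n m L E')
    (i : Fin m) (hcrit : ∀ k, power n m L E k ≤ power n m L E i)
    (i' : Fin m) (hlt : power n m L E i' < power n m L E i) :
    (¬ ∃ δ : ℝ, ∃ j : Fin n, 0 < δ ∧ A j i = true ∧ A j i' = true ∧
        δ ≤ E i j ∧ E i' j + δ ≤ pmax j * L i') ∧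
    (∀ j : Fin n, A j i = true → A j i' = true → 0 < E i j →
        E i' j = pmax j * L i') :=
  no_move_from_critical_general n m A L pmax e hL E hE hopt i i' hlt
end

section
/- Minimizing F(p) = Σ_i L_i p_i² over feasible schedules also minimizes the maximum peak: the optimal power vector for the weighted 2-norm objective achieves max_i p_i equal to the minimum possible value of max_i p_i over all feasible schedules. -/
/-- Reachability in the residual graph of the schedule `E`. -/
inductive Reach (n m : ℕ) (A : Fin n → Fin m → Bool) (L : Fin m → ℝ)
    (pmax : Fin n → ℝ) (E : Fin m → Fin n → ℝ) (i0 : Fin m) : Fin m → Prop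
  | base : Reach n m A L pmax E i0 i0
  | step {i i' : Fin m} {j : Fin n} (h : Reach n m A L pmax E i0 i)
      (h1 : 0 < E i j) (h2 : A j i' = true) (h3 : E i' j < pmax j * L i') :
      Reach n m A L pmax E i0 i'

/-- Along a residual path one can transfer a small amount `δ` of energy from
interval `i0` to interval `i`, staying feasible, keeping all column sums, and
moving each entry by at most `ε`. -/
lemma transfer_aux {n m : ℕ} {A : Fin n → Fin m → Bool} {L : Fin m → ℝ}
    {pmax e : Fin n → ℝ} {E : Fin m → Fin n → ℝ}
    (hE : Feasible n m A L pmax e E) {i0 i : Fin m}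
    (hreach : Reach n m A L pmax E i0 i) :
    ∀ ε : ℝ, 0 < ε → ∃ δ : ℝ, ∃ E₂ : Fin m → Fin n → ℝ, 0 < δ ∧ δ ≤ ε ∧
      Feasible n m A L pmax e E₂ ∧
      (∀ i'' j, |E₂ i'' j - E i'' j| ≤ ε) ∧
      (∀ i'', ∑ j, E₂ i'' j =
        ∑ j, E i'' j + δ * ((if i'' = i then 1 else 0) - (if i'' = i0 then 1 else 0))) := by
  induction hreach with
  | base =>
    intro ε hε
    exact ⟨ε, E, hε, le_refl _, hE, fun i'' j => by simp [abs_of_nonneg, hε.le],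
      fun i'' => by simp⟩
  | @step i i' j hr h1 h2 h3 ih =>
    intro ε hε
    set c : ℝ := min ε (min (E i j) (pmax j * L i' - E i' j)) / 2 with hc
    have hc0 : 0 < c := by
      have : 0 < min ε (min (E i j) (pmax j * L i' - E i' j)) :=
        lt_min hε (lt_min h1 (by linarith))
      positivity
    have hcε : 2 * c ≤ ε := by
      have := min_le_left ε (min (E i j) (pmax j * L i' - E i' j)); linarith [hc0]
    have hcE : 2 * c ≤ E i j := by
      have h' := min_le_right ε (min (E i j) (pmax j * L i' - E i' j))
      have := min_le_left (E i j) (pmax j * L i' - E i' j); linarith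
    have hccap : 2 * c ≤ pmax j * L i' - E i' j := by
      have h' := min_le_right ε (min (E i j) (pmax j * L i' - E i' j))
      have := min_le_right (E i j) (pmax j * L i' - E i' j); linarith
    obtain ⟨δ, E₂, hδ0, hδc, hE₂feas, hE₂close, hE₂row⟩ := ih c hc0
    obtain ⟨h2nn, h2av, h2cap, h2dem⟩ := hE₂feas
    refine ⟨δ, fun a b => E₂ a b + (if a = i' ∧ b = j then δ else 0)
      - (if a = i ∧ b = j then δ else 0), hδ0, le_trans hδc (by linarith), ?_, ?_, ?_⟩
    · refine ⟨?_, ?_, ?_, ?_⟩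
      · intro a b
        dsimp only
        have hclose := abs_le.1 (hE₂close a b)
        by_cases hai' : a = i' ∧ b = j <;> by_cases hai : a = i ∧ b = j
        · rw [if_pos hai', if_pos hai]; linarith [h2nn a b]
        · rw [if_pos hai', if_neg hai]; linarith [h2nn a b]
        · obtain ⟨rfl, rfl⟩ := hai
          rw [if_neg hai', if_pos ⟨rfl, rfl⟩]; linarith
        · rw [if_neg hai', if_neg hai]; linarith [h2nn a b]
      · intro a b hab
        dsimp only
        have hbne : ¬(a = i' ∧ b = j) := by
          rintro ⟨rfl, rfl⟩; rw [h2] at hab; simp at hab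
        have hane : ¬(a = i ∧ b = j) := by
          rintro ⟨rfl, rfl⟩; have := hE.2.1 a b hab; linarith
        rw [if_neg hbne, if_neg hane, h2av a b hab]; ring
      · intro a b
        dsimp only
        have hclose := abs_le.1 (hE₂close a b)
        by_cases hai' : a = i' ∧ b = j <;> by_cases hai : a = i ∧ b = j
        · rw [if_pos hai', if_pos hai]; linarith [h2cap a b]
        · obtain ⟨rfl, rfl⟩ := hai'
          rw [if_pos ⟨rfl, rfl⟩, if_neg hai]; linarith
        · rw [if_neg hai', if_pos hai]; linarith [h2cap a b]
        · rw [if_neg hai', if_neg hai]; linarith [h2cap a b]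
      · intro b
        dsimp only
        have : (∑ a, (E₂ a b + (if a = i' ∧ b = j then δ else 0)
            - (if a = i ∧ b = j then δ else 0))) = ∑ a, E₂ a b := by
          rw [Finset.sum_sub_distrib, Finset.sum_add_distrib]
          by_cases hbj : b = j <;> simp [hbj, Finset.sum_ite_eq']
        rw [this]; exact h2dem b
    · intro a b
      dsimp only
      have hclose := abs_le.1 (hE₂close a b)
      rw [abs_le]
      by_cases hai' : a = i' ∧ b = j <;> by_cases hai : a = i ∧ b = j
      · rw [if_pos hai', if_pos hai]; constructor <;> linarith
      · rw [if_pos hai', if_neg hai]; constructor <;> linarith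
      · rw [if_neg hai', if_pos hai]; constructor <;> linarith
      · rw [if_neg hai', if_neg hai]; constructor <;> linarith
    · intro a
      dsimp only
      have hsplit : (∑ b, (E₂ a b + (if a = i' ∧ b = j then δ else 0)
          - (if a = i ∧ b = j then δ else 0)))
          = (∑ b, E₂ a b) + (if a = i' then δ else 0) - (if a = i then δ else 0) := by
        rw [Finset.sum_sub_distrib, Finset.sum_add_distrib]
        congr 1
        · congr 1
          by_cases hai' : a = i' <;> simp [hai']
        · by_cases hai : a = i <;> simp [hai]
      rw [hsplit, hE₂row a]
      split_ifs <;> ring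

lemma objF_arith {L0 L1 u0 u1 δ : ℝ} (hL0 : 0 < L0) (hL1 : 0 < L1) (hδ : 0 < δ)
    (h : δ * (1/L0 + 1/L1) ≤ u0/L0 - u1/L1) :
    L0*((u0-δ)/L0)^2 + L1*((u1+δ)/L1)^2 < L0*(u0/L0)^2 + L1*(u1/L1)^2 := by
  have e0 : L0*((u0-δ)/L0)^2 = (u0-δ)^2/L0 := by field_simp
  have e1 : L1*((u1+δ)/L1)^2 = (u1+δ)^2/L1 := by field_simp
  have e2 : L0*(u0/L0)^2 = u0^2/L0 := by field_simp
  have e3 : L1*(u1/L1)^2 = u1^2/L1 := by field_simp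
  rw [e0, e1, e2, e3]
  rw [div_add_div _ _ (ne_of_gt hL0) (ne_of_gt hL1), div_add_div _ _ (ne_of_gt hL0) (ne_of_gt hL1),
    div_lt_div_iff₀ (by positivity) (by positivity)]
  have h' : δ * (L0 + L1) ≤ u0 * L1 - u1 * L0 := by
    have := mul_le_mul_of_nonneg_right h (le_of_lt (mul_pos hL0 hL1))
    field_simp at this
    nlinarith
  nlinarith [mul_pos hL0 hL1, mul_le_mul_of_nonneg_left h' hδ.le,
    mul_pos (mul_pos hL0 hL1) hδ, mul_pos (mul_pos hL0 hL1) (lt_of_lt_of_le (by positivity : (0:ℝ) < δ*(L0+L1)) h')]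

/-- An `objF`-optimal schedule meets every demand with equality. -/
lemma demand_eq {n m : ℕ} {A : Fin n → Fin m → Bool} {L : Fin m → ℝ}
    {pmax e : Fin n → ℝ} {E : Fin m → Fin n → ℝ} (hL : ∀ i, 0 < L i)
    (he : ∀ j, 0 ≤ e j) (hE : Feasible n m A L pmax e E)
    (hopt : ∀ E', Feasible n m A L pmax e E' → objF n m L E ≤ objF n m L E') :
    ∀ j, ∑ i, E i j = e j := by
  obtain ⟨hnn, hav, hcap, hdem⟩ := hE
  intro j
  by_contra hne
  have hlt : e j < ∑ i, E i j := lt_of_le_of_ne (hdem j) (Ne.symm hne)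
  have hpos : (0:ℝ) < ∑ i, E i j := lt_of_le_of_lt (he j) hlt
  have hex : ∃ a, 0 < E a j := by
    by_contra hno; push_neg at hno
    have : ∑ i, E i j ≤ 0 := Finset.sum_nonpos (fun i _ => hno i)
    linarith
  obtain ⟨a0, ha0⟩ := hex
  set δ : ℝ := min (E a0 j) ((∑ i, E i j) - e j) with hδdef
  have hδ0 : 0 < δ := lt_min ha0 (by linarith)
  have hδ1 : δ ≤ E a0 j := min_le_left _ _
  have hδ2 : δ ≤ (∑ i, E i j) - e j := min_le_right _ _
  set E₂ : Fin m → Fin n → ℝ := fun a b => E a b - if a = a0 ∧ b = j then δ else 0 with hE₂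
  have hcol : ∀ b, ∑ a, E₂ a b = (∑ a, E a b) - (if b = j then δ else 0) := by
    intro b
    rw [hE₂]; dsimp only
    rw [Finset.sum_sub_distrib]
    congr 1
    by_cases hbj : b = j <;> simp [hbj, Finset.sum_ite_eq']
  have hrow : ∀ a, ∑ b, E₂ a b = (∑ b, E a b) - (if a = a0 then δ else 0) := by
    intro a
    rw [hE₂]; dsimp only
    rw [Finset.sum_sub_distrib]
    congr 1
    by_cases ha : a = a0 <;> simp [ha, Finset.sum_ite_eq']
  have hfeas₂ : Feasible n m A L pmax e E₂ := by
    refine ⟨?_, ?_, ?_, ?_⟩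
    · intro a b; rw [hE₂]; dsimp only
      by_cases hab : a = a0 ∧ b = j
      · obtain ⟨rfl, rfl⟩ := hab; rw [if_pos ⟨rfl, rfl⟩]; linarith
      · rw [if_neg hab]; linarith [hnn a b]
    · intro a b hab; rw [hE₂]; dsimp only
      have : ¬(a = a0 ∧ b = j) := by
        rintro ⟨rfl, rfl⟩; rw [hav a b hab] at ha0; exact lt_irrefl _ ha0
      rw [if_neg this, hav a b hab]; ring
    · intro a b; rw [hE₂]; dsimp only
      by_cases hab : a = a0 ∧ b = j
      · rw [if_pos hab]; linarith [hcap a b]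
      · rw [if_neg hab]; linarith [hcap a b]
    · intro b; rw [hcol b]
      by_cases hbj : b = j
      · subst hbj; rw [if_pos rfl]; linarith
      · rw [if_neg hbj]; linarith [hdem b]
  have hstrict : L a0 * (power n m L E₂ a0)^2 < L a0 * (power n m L E a0)^2 := by
    have hu : (0:ℝ) ≤ (∑ b, E a0 b) - δ := by
      have : E a0 j ≤ ∑ b, E a0 b :=
        Finset.single_le_sum (fun b _ => hnn a0 b) (Finset.mem_univ j)
      linarith
    have hpw : power n m L E₂ a0 = ((∑ b, E a0 b) - δ) / L a0 := by
      rw [power, hrow a0, if_pos rfl]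
    have hLa := hL a0
    rw [hpw, power]
    have h0 : (0:ℝ) ≤ ((∑ b, E a0 b) - δ) / L a0 := by positivity
    have h1 : ((∑ b, E a0 b) - δ) / L a0 < (∑ b, E a0 b) / L a0 := by
      apply div_lt_div_of_pos_right ?_ hLa
      linarith
    exact mul_lt_mul_of_pos_left (pow_lt_pow_left₀ h1 h0 two_ne_zero) hLa
  have hobj : objF n m L E₂ < objF n m L E := by
    rw [objF, objF]
    refine Finset.sum_lt_sum (fun a _ => ?_) ⟨a0, Finset.mem_univ a0, hstrict⟩
    by_cases ha : a = a0
    · subst ha; exact hstrict.le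
    · have hpw : power n m L E₂ a = power n m L E a := by
        rw [power, power, hrow a, if_neg ha]; ring_nf
      rw [hpw]
  exact absurd (hopt E₂ hfeas₂) (not_le.mpr hobj)

/-- The ℓ₂²-optimal schedule also minimizes the maximum peak: for every feasible
schedule `E'` and every interval `i`, some interval of `E'` has power at least
`power E i` (i.e. `max p(E) ≤ max p(E')`). -/
theorem l2_optimal_is_minmax (n m : ℕ) (A : Fin n → Fin m → Bool) (L : Fin m → ℝ)
    (pmax e : Fin n → ℝ) (hL : ∀ i, 0 < L i) (hp : ∀ j, 0 < pmax j)
    (he : ∀ j, 0 ≤ e j)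
    (E : Fin m → Fin n → ℝ) (hE : Feasible n m A L pmax e E)
    (hopt : ∀ E', Feasible n m A L pmax e E' → objF n m L E ≤ objF n m L E') :
    ∀ E', Feasible n m A L pmax e E' →
      ∀ i : Fin m, ∃ i' : Fin m, power n m L E i ≤ power n m L E' i' := by
  classical
  intro E' hE' i0
  by_contra hcon
  push_neg at hcon
  have hdeq := demand_eq hL he hE hopt
  obtain ⟨hnn, hav, hcap, hdem⟩ := hE
  obtain ⟨hnn', hav', hcap', hdem'⟩ := hE'
  by_cases hcaseA : ∃ i1, Reach n m A L pmax E i0 i1 ∧ power n m L E i1 < power n m L E i0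
  · -- an augmenting path exists: improve the objective, contradiction
    obtain ⟨i1, hr1, hp1⟩ := hcaseA
    have hL0 := hL i0; have hL1 := hL i1
    have hne : i1 ≠ i0 := fun h => by rw [h] at hp1; exact lt_irrefl _ hp1
    set ε : ℝ := (power n m L E i0 - power n m L E i1) / (1/L i0 + 1/L i1) with hεdef
    have hεpos : 0 < ε := by
      apply div_pos (by linarith) (by positivity)
    obtain ⟨δ, E₂, hδ0, hδε, hfeas₂, hclose, hrowf⟩ :=
      transfer_aux ⟨hnn, hav, hcap, hdem⟩ hr1 ε hεpos
    have hrow0 : ∑ b, E₂ i0 b = (∑ b, E i0 b) - δ := by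
      rw [hrowf i0, if_neg (Ne.symm hne), if_pos rfl]; ring
    have hrow1 : ∑ b, E₂ i1 b = (∑ b, E i1 b) + δ := by
      rw [hrowf i1, if_pos rfl, if_neg hne]; ring
    have hrowo : ∀ a, a ≠ i0 → a ≠ i1 → ∑ b, E₂ a b = ∑ b, E a b := by
      intro a h0 h1; rw [hrowf a, if_neg h1, if_neg h0]; ring
    have hobj : objF n m L E₂ < objF n m L E := by
      have hzero : ∀ a ∈ Finset.univ, a ∉ ({i0, i1} : Finset (Fin m)) →
          L a * (power n m L E₂ a)^2 - L a * (power n m L E a)^2 = 0 := by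
        intro a _ hnot
        simp only [Finset.mem_insert, Finset.mem_singleton, not_or] at hnot
        rw [power, power, hrowo a hnot.1 hnot.2]; ring
      have hdiff : objF n m L E₂ - objF n m L E =
          (L i0 * (power n m L E₂ i0)^2 - L i0 * (power n m L E i0)^2)
          + (L i1 * (power n m L E₂ i1)^2 - L i1 * (power n m L E i1)^2) := by
        rw [objF, objF, ← Finset.sum_sub_distrib,
          ← Finset.sum_subset (Finset.subset_univ ({i0, i1} : Finset (Fin m))) hzero,
          Finset.sum_pair (Ne.symm hne)]
      have hkey : δ * (1/L i0 + 1/L i1) ≤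
          (∑ b, E i0 b)/L i0 - (∑ b, E i1 b)/L i1 := by
        have hs : (0:ℝ) < 1/L i0 + 1/L i1 := by positivity
        have := (le_div_iff₀ hs).mp hδε
        calc δ * (1/L i0 + 1/L i1) ≤ power n m L E i0 - power n m L E i1 := this
          _ = (∑ b, E i0 b)/L i0 - (∑ b, E i1 b)/L i1 := by rw [power, power]
      have harith := objF_arith hL0 hL1 hδ0 hkey
      have hpw0 : power n m L E₂ i0 = ((∑ b, E i0 b) - δ) / L i0 := by
        rw [power, hrow0]
      have hpw1 : power n m L E₂ i1 = ((∑ b, E i1 b) + δ) / L i1 := by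
        rw [power, hrow1]
      simp only [power] at hdiff
      rw [hrow0, hrow1] at hdiff
      linarith [harith]
    exact absurd (hopt E₂ hfeas₂) (not_le.mpr hobj)
  · -- no augmenting path: counting contradiction with E'
    push_neg at hcaseA
    set R : Finset (Fin m) := Finset.univ.filter (fun a => Reach n m A L pmax E i0 a) with hR
    have hmemR : ∀ a, a ∈ R ↔ Reach n m A L pmax E i0 a := by
      intro a; simp [hR]
    have hi0R : i0 ∈ R := (hmemR i0).mpr Reach.base
    set JR : Finset (Fin n) := Finset.univ.filter (fun b => ∃ a ∈ R, 0 < E a b) with hJR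
    have hmemJR : ∀ b, b ∈ JR ↔ ∃ a ∈ R, 0 < E a b := by
      intro b; simp [hJR]
    -- step (s1)
    have s1 : power n m L E i0 * ∑ a ∈ R, L a ≤ ∑ a ∈ R, L a * power n m L E a := by
      rw [Finset.mul_sum]
      refine Finset.sum_le_sum (fun a haR => ?_)
      have hge : power n m L E i0 ≤ power n m L E a := hcaseA a ((hmemR a).mp haR)
      have := mul_le_mul_of_nonneg_right hge (hL a).le
      linarith
    -- step (s2)
    have s2 : ∑ a ∈ R, L a * power n m L E a = ∑ a ∈ R, ∑ b, E a b := by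
      refine Finset.sum_congr rfl (fun a _ => ?_)
      rw [power, mul_div_cancel₀ _ (ne_of_gt (hL a))]
    -- step (s3)
    have s3 : ∑ a ∈ R, ∑ b, E a b = ∑ b ∈ JR, ∑ a ∈ R, E a b := by
      rw [Finset.sum_comm]
      refine (Finset.sum_subset (Finset.subset_univ JR) ?_).symm
      intro b _ hbnot
      rw [hmemJR] at hbnot; push_neg at hbnot
      refine Finset.sum_eq_zero (fun a haR => ?_)
      exact le_antisymm (hbnot a haR) (hnn a b)
    -- step (s4)
    have s4 : ∀ b ∈ JR, ∑ a ∈ R, E a b ≤ ∑ a ∈ R, E' a b := by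
      intro b hb
      obtain ⟨a2, ha2R, ha2pos⟩ := (hmemJR b).mp hb
      have houts : ∀ a, a ∉ R → E' a b ≤ E a b := by
        intro a haR
        cases hAval : A b a with
        | false => rw [hav' a b hAval]; exact hnn a b
        | true =>
          have hfull : E a b = pmax b * L a := by
            by_contra hlt
            have : E a b < pmax b * L a := lt_of_le_of_ne (hcap a b) hlt
            exact haR ((hmemR a).mpr (Reach.step ((hmemR a2).mp ha2R) ha2pos hAval this))
          rw [hfull]; exact hcap' a b
      have hsplitE : ∑ a ∈ R, E a b + ∑ a ∈ Finset.univ.filter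
          (fun a => ¬ Reach n m A L pmax E i0 a), E a b = e b := by
        rw [hR, Finset.sum_filter_add_sum_filter_not]; exact hdeq b
      have hsplitE' : ∑ a ∈ R, E' a b + ∑ a ∈ Finset.univ.filter
          (fun a => ¬ Reach n m A L pmax E i0 a), E' a b = ∑ a, E' a b := by
        rw [hR, Finset.sum_filter_add_sum_filter_not]
      have hcompl : ∑ a ∈ Finset.univ.filter (fun a => ¬ Reach n m A L pmax E i0 a), E' a b
          ≤ ∑ a ∈ Finset.univ.filter (fun a => ¬ Reach n m A L pmax E i0 a), E a b := by
        refine Finset.sum_le_sum (fun a ha => ?_)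
        rw [Finset.mem_filter] at ha
        exact houts a (by rw [hmemR]; exact ha.2)
      have := hdem' b
      linarith
    -- step (s5) and (s6)
    have s5 : ∑ b ∈ JR, ∑ a ∈ R, E' a b ≤ ∑ b, ∑ a ∈ R, E' a b := by
      refine Finset.sum_le_sum_of_subset_of_nonneg (Finset.subset_univ JR) ?_
      intro b _ _
      exact Finset.sum_nonneg (fun a _ => hnn' a b)
    have s6 : ∑ b, ∑ a ∈ R, E' a b < power n m L E i0 * ∑ a ∈ R, L a := by
      rw [Finset.sum_comm, Finset.mul_sum]
      refine Finset.sum_lt_sum_of_nonempty ⟨i0, hi0R⟩ (fun a _ => ?_)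
      have h1 : power n m L E' a < power n m L E i0 := hcon a
      have h2 : ∑ b, E' a b = L a * power n m L E' a := by
        rw [power, mul_div_cancel₀ _ (ne_of_gt (hL a))]
      rw [h2, mul_comm (power n m L E i0) (L a)]
      exact mul_lt_mul_of_pos_left h1 (hL a)
    have chain : ∑ b ∈ JR, ∑ a ∈ R, E a b ≤ ∑ b ∈ JR, ∑ a ∈ R, E' a b :=
      Finset.sum_le_sum s4
    linarith
end

section
/- Given a fill level c ≥ 0, a feasible schedule with p_i ≤ c for every interval i exists if and only if the maximum s–t flow in the FOCS flow network with sink-edge capacities c·L_i equals Σ_j e_j. -/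
/-! A flow is bounded by its source capacities, so its value `∑ j, ∑ i, x i j` is at most
`∑ j, e j`, with equality exactly when every source edge is saturated, i.e. when the flow meets
every demand. Since `L i > 0`, the sink capacity `c * L i` is the power bound `p i ≤ c`
multiplied by `L i`. -/

theorem fill_level_iff_maxflow_general (n m : ℕ) (A : Fin n → Fin m → Bool)
    (L : Fin m → ℝ) (pmax e : Fin n → ℝ)
    (hL : ∀ i, 0 < L i) (c : ℝ) :
    (∃ E : Fin m → Fin n → ℝ,
      (∀ i j, 0 ≤ E i j) ∧ (∀ i j, A j i = false → E i j = 0) ∧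
      (∀ i j, E i j ≤ pmax j * L i) ∧ (∀ j, ∑ i, E i j = e j) ∧
      (∀ i, (∑ j, E i j) / L i ≤ c)) ↔
    IsGreatest {v : ℝ | ∃ x : Fin m → Fin n → ℝ,
      (∀ i j, 0 ≤ x i j) ∧ (∀ i j, A j i = false → x i j = 0) ∧
      (∀ i j, x i j ≤ pmax j * L i) ∧ (∀ j, ∑ i, x i j ≤ e j) ∧
      (∀ i, ∑ j, x i j ≤ c * L i) ∧ v = ∑ j, ∑ i, x i j} (∑ j, e j) := by
  have power_le_iff (x : Fin m → Fin n → ℝ) (i : Fin m) :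
      (∑ j, x i j) / L i ≤ c ↔ ∑ j, x i j ≤ c * L i :=
    div_le_iff₀ (hL i)
  constructor
  · rintro ⟨E, hE0, hEA, hEmax, hEdemand, hEpower⟩
    refine ⟨⟨E, hE0, hEA, hEmax, fun j => (hEdemand j).le,
      fun i => (power_le_iff E i).mp (hEpower i), by simp only [hEdemand]⟩, ?_⟩
    rintro v ⟨x, -, -, -, hxsource, -, rfl⟩
    exact Finset.sum_le_sum fun j _ => hxsource j
  · rintro ⟨⟨x, hx0, hxA, hxmax, hxsource, hxsink, hvalue⟩, -⟩
    have saturated : ∀ j ∈ Finset.univ, ∑ i, x i j = e j :=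
      (Finset.sum_eq_sum_iff_of_le fun j _ => hxsource j).mp hvalue.symm
    exact ⟨x, hx0, hxA, hxmax, fun j => saturated j (Finset.mem_univ j),
      fun i => (power_le_iff x i).mpr (hxsink i)⟩

/-- Fill-level characterization: a feasible schedule with all powers at most `c`
exists iff the maximum `s`–`t` flow of the FOCS network with sink capacities
`c * L i` attains the value `∑ j, e j`.  Flows in the tripartite FOCS network are
encoded by their job-to-interval components `x`. -/
theorem fill_level_iff_maxflow (n m : ℕ) (A : Fin n → Fin m → Bool)
    (L : Fin m → ℝ) (pmax e : Fin n → ℝ)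
    (hL : ∀ i, 0 < L i) (he : ∀ j, 0 ≤ e j) (c : ℝ) (hc : 0 ≤ c) :
    (∃ E : Fin m → Fin n → ℝ,
      (∀ i j, 0 ≤ E i j) ∧ (∀ i j, A j i = false → E i j = 0) ∧
      (∀ i j, E i j ≤ pmax j * L i) ∧ (∀ j, ∑ i, E i j = e j) ∧
      (∀ i, (∑ j, E i j) / L i ≤ c)) ↔
    IsGreatest {v : ℝ | ∃ x : Fin m → Fin n → ℝ,
      (∀ i j, 0 ≤ x i j) ∧ (∀ i j, A j i = false → x i j = 0) ∧
      (∀ i j, x i j ≤ pmax j * L i) ∧ (∀ j, ∑ i, x i j ≤ e j) ∧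
      (∀ i, ∑ j, x i j ≤ c * L i) ∧ v = ∑ j, ∑ i, x i j} (∑ j, e j) :=
  fill_level_iff_maxflow_general n m A L pmax e hL c
end

section
/- The minimal uniform fill level c* := min{c ≥ 0 : a feasible schedule with max_i p_i ≤ c exists} is attained, and equals max over nonempty interval subsets S of (Σ_{j : J⁻¹(j) ⊆ S} e_j)/(Σ_{i∈S} L_i). -/
/-!
Fix a level `c` and look at partial schedules: nonnegative, supported on the allowed pairs,
serving at most `e j` of each job and loading each interval `i` by at most `c * L i`.
By compactness some partial schedule serves the most demand. If a job were still short, every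
interval reachable from it by an augmenting path (forward along an allowed pair, backward along
a pair that carries load) is full, since otherwise flow could be pushed along the path. The jobs
confined to the set `S` of reachable intervals then demand more than `c * ∑ i ∈ S, L i`.
So the Hall-type condition at level `c` is sufficient; it is clearly necessary, hence the least
feasible level is the largest density.
-/

open Finset

namespace Transport

variable {ι κ : Type*}

section Single

variable [DecidableEq ι] [DecidableEq κ] {E : ι → κ → ℝ}

def single (i : ι) (j : κ) (ε : ℝ) : ι → κ → ℝ := fun a b => if a = i ∧ b = j then ε else 0

theorem add_single_apply (i a : ι) (j b : κ) (ε : ℝ) :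
    (E + single i j ε) a b = E a b + if a = i ∧ b = j then ε else 0 := rfl

theorem sum_row_add_single [Fintype κ] (i a : ι) (j : κ) (ε : ℝ) :
    ∑ b, (E + single i j ε) a b = ∑ b, E a b + if a = i then ε else 0 := by
  simp [add_single_apply, sum_add_distrib, ite_and]

theorem sum_col_add_single [Fintype ι] (i : ι) (j b : κ) (ε : ℝ) :
    ∑ a, (E + single i j ε) a b = ∑ a, E a b + if b = j then ε else 0 := by
  simp [add_single_apply, sum_add_distrib, ite_and]

end Single

variable [Fintype ι] [Fintype κ]

/-- `E i j` is the amount of job `j` served in interval `i`, which is allowed when `R j i`;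
`e j` is the demand of job `j` and `u i` the capacity of interval `i`. -/
structure IsPartialFlow (R : κ → ι → Prop) (u : ι → ℝ) (e : κ → ℝ) (E : ι → κ → ℝ) : Prop where
  nonneg : ∀ i j, 0 ≤ E i j
  eq_zero_of_not_rel : ∀ i j, ¬ R j i → E i j = 0
  sum_col_le : ∀ j, ∑ i, E i j ≤ e j
  sum_row_le : ∀ i, ∑ j, E i j ≤ u i

structure IsMaxFlow (R : κ → ι → Prop) (u : ι → ℝ) (e : κ → ℝ) (E : ι → κ → ℝ) : Prop
    extends IsPartialFlow R u e E where
  sum_le : ∀ E', IsPartialFlow R u e E' → ∑ j, ∑ i, E' i j ≤ ∑ j, ∑ i, E i j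

variable {R : κ → ι → Prop} {u : ι → ℝ} {e : κ → ℝ} {E : ι → κ → ℝ}

open Classical in
noncomputable def confined (R : κ → ι → Prop) (S : Finset ι) : Finset κ :=
  univ.filter fun j => ∀ i, R j i → i ∈ S

theorem mem_confined {S : Finset ι} {j : κ} : j ∈ confined R S ↔ ∀ i, R j i → i ∈ S := by
  simp [confined]

theorem confined_empty (hR : ∀ j, ∃ i, R j i) : confined R ∅ = ∅ :=
  eq_empty_of_forall_notMem fun j hj =>
    (hR j).elim fun i hi => notMem_empty i (mem_confined.1 hj i hi)

theorem IsPartialFlow.le (hE : IsPartialFlow R u e E) (i : ι) (j : κ) : E i j ≤ e j :=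
  (single_le_sum (fun i _ => hE.nonneg i j) (mem_univ i)).trans (hE.sum_col_le j)

theorem IsPartialFlow.sum_mem_eq_sum (hE : IsPartialFlow R u e E) {S : Finset ι} {j : κ}
    (hj : ∀ i, R j i → i ∈ S) : ∑ i ∈ S, E i j = ∑ i, E i j :=
  sum_subset (subset_univ S) fun i _ hi => hE.eq_zero_of_not_rel i j (mt (hj i) hi)

theorem isClosed_setOf_isPartialFlow : IsClosed {E | IsPartialFlow R u e E} := by
  have h : {E | IsPartialFlow R u e E} = (⋂ i, ⋂ j, {E | 0 ≤ E i j}) ∩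
      (⋂ i, ⋂ j, ⋂ (_ : ¬ R j i), {E | E i j = 0}) ∩
      (⋂ j, {E | ∑ i, E i j ≤ e j}) ∩ ⋂ i, {E | ∑ j, E i j ≤ u i} := by
    ext E
    simp only [Set.mem_ofPred_eq, Set.mem_inter_iff, Set.mem_iInter]
    exact ⟨fun h => ⟨⟨⟨h.1, h.2⟩, h.3⟩, h.4⟩, fun ⟨⟨⟨h1, h2⟩, h3⟩, h4⟩ => ⟨h1, h2, h3, h4⟩⟩
  rw [h]
  refine (((isClosed_iInter fun i => isClosed_iInter fun j =>
    isClosed_le continuous_const (by fun_prop)).inter ?_).inter ?_).inter ?_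
  · exact isClosed_iInter fun i => isClosed_iInter fun j => isClosed_iInter fun _ =>
      isClosed_eq (by fun_prop) continuous_const
  · exact isClosed_iInter fun j => isClosed_le (by fun_prop) continuous_const
  · exact isClosed_iInter fun i => isClosed_le (by fun_prop) continuous_const

theorem exists_isMaxFlow (h0 : IsPartialFlow R u e 0) : ∃ E, IsMaxFlow R u e E := by
  have hK : IsCompact {E | IsPartialFlow R u e E} :=
    (isCompact_Icc (a := 0) (b := fun _ => e)).of_isClosed_subset isClosed_setOf_isPartialFlow
      fun E hE => ⟨hE.nonneg, hE.le⟩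
  obtain ⟨E, hE, hmax⟩ := hK.exists_isMaxOn ⟨0, h0⟩
    (by fun_prop : Continuous fun E : ι → κ → ℝ => ∑ j, ∑ i, E i j).continuousOn
  exact ⟨E, hE, fun E' hE' => hmax hE'⟩

section Augment

variable [DecidableEq ι] [DecidableEq κ]

theorem IsMaxFlow.sum_row_eq_of_deficient (hE : IsMaxFlow R u e E) {i : ι} {j : κ}
    (hj : ∑ a, E a j < e j) (hR : R j i) : ∑ b, E i b = u i := by
  refine (hE.sum_row_le i).antisymm (not_lt.1 fun hi => ?_)
  set ε := min (e j - ∑ a, E a j) (u i - ∑ b, E i b)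
  have hε : 0 < ε := lt_min (sub_pos.2 hj) (sub_pos.2 hi)
  have hE' : IsPartialFlow R u e (E + single i j ε) := by
    refine ⟨fun a b => ?_, fun a b hab => ?_, fun b => ?_, fun a => ?_⟩
    · rw [add_single_apply]; split_ifs <;> linarith [hE.nonneg a b]
    · rw [add_single_apply, hE.eq_zero_of_not_rel a b hab, if_neg]
      · simp
      · rintro ⟨rfl, rfl⟩; exact hab hR
    · rw [sum_col_add_single]; split_ifs with hb
      · subst hb; linarith [min_le_left (e b - ∑ a, E a b) (u i - ∑ b, E i b)]
      · simpa using hE.sum_col_le b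
    · rw [sum_row_add_single]; split_ifs with ha
      · subst ha; linarith [min_le_right (e j - ∑ a, E a j) (u a - ∑ b, E a b)]
      · simpa using hE.sum_row_le a
  have := hE.sum_le _ hE'
  simp only [sum_col_add_single, sum_add_distrib, sum_ite_eq', mem_univ, if_true] at this
  linarith

theorem IsMaxFlow.exists_shift (hE : IsMaxFlow R u e E) {i i' : ι} {j : κ}
    (hpos : 0 < E i' j) (hR : R j i) (hi : ∑ b, E i b < u i) :
    ∃ E', IsMaxFlow R u e E' ∧ (∀ b, ∑ a, E' a b = ∑ a, E a b) ∧
      (∀ a b, 0 < E a b → 0 < E' a b) ∧ ∑ b, E' i' b < u i' := by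
  set ε := min (E i' j) (u i - ∑ b, E i b) / 2
  have hε : 0 < ε := half_pos (lt_min hpos (sub_pos.2 hi))
  have hεi' : ε ≤ E i' j / 2 := div_le_div_of_nonneg_right (min_le_left _ _) zero_le_two
  have hεi : ε < u i - ∑ b, E i b :=
    (half_lt_self (lt_min hpos (sub_pos.2 hi))).trans_le (min_le_right _ _)
  set E' := E + single i j ε + single i' j (-ε)
  have hentry : ∀ a b, E a b / 2 ≤ E' a b := by
    intro a b
    simp only [E', add_single_apply]
    by_cases h : a = i' ∧ b = j
    · obtain ⟨rfl, rfl⟩ := h; split_ifs <;> linarith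
    · rw [if_neg h]; split_ifs <;> linarith [hE.nonneg a b]
  have hcol : ∀ b, ∑ a, E' a b = ∑ a, E a b := by
    intro b; simp only [E', sum_col_add_single]; split_ifs <;> ring
  have hrow : ∀ a,
      ∑ b, E' a b = ∑ b, E a b + (if a = i then ε else 0) - if a = i' then ε else 0 := by
    intro a; simp only [E', sum_row_add_single]; split_ifs <;> ring
  have hpos' : ∀ a b, 0 < E a b → 0 < E' a b := fun a b hab =>
    (half_pos hab).trans_le (hentry a b)
  refine ⟨E', ⟨⟨fun a b => ?_, fun a b hab => ?_, fun b => ?_, fun a => ?_⟩, fun E'' h => ?_⟩,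
    hcol, hpos', ?_⟩
  · linarith [hentry a b, hE.nonneg a b]
  · have h₁ : ¬(a = i ∧ b = j) := by rintro ⟨rfl, rfl⟩; exact hab hR
    have h₂ : ¬(a = i' ∧ b = j) := by
      rintro ⟨rfl, rfl⟩; exact hpos.ne' (hE.eq_zero_of_not_rel _ _ hab)
    simp [E', add_single_apply, h₁, h₂, hE.eq_zero_of_not_rel a b hab]
  · rw [hcol]; exact hE.sum_col_le b
  · rw [hrow]
    by_cases ha : a = i
    · subst ha; split_ifs <;> linarith
    · rw [if_neg ha]; split_ifs <;> linarith [hE.sum_row_le a]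
  · exact (hE.sum_le E'' h).trans_eq (sum_congr rfl fun b _ => (hcol b).symm)
  · rw [hrow, if_pos rfl]
    by_cases h : i' = i
    · subst h; rw [if_pos rfl]; linarith
    · rw [if_neg h]; linarith [hE.sum_row_le i']

inductive Reachable (R : κ → ι → Prop) (e : κ → ℝ) (E : ι → κ → ℝ) : ι → Prop
  | of_deficient {i : ι} {j : κ} : ∑ a, E a j < e j → R j i → Reachable R e E i
  | of_pos {i' i : ι} {j : κ} : Reachable R e E i' → 0 < E i' j → R j i → Reachable R e E i

theorem IsMaxFlow.sum_row_eq_of_reachable (hE : IsMaxFlow R u e E) {i : ι}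
    (hi : Reachable R e E i) : ∑ b, E i b = u i := by
  -- Pushing flow along the last edge of a path changes the flow, so the induction runs over all
  -- maximal flows with the same column sums and at least the support of `E`.
  suffices ∀ E', IsMaxFlow R u e E' → (∀ b, ∑ a, E' a b = ∑ a, E a b) →
      (∀ a b, 0 < E a b → 0 < E' a b) → ∑ b, E' i b = u i from
    this E hE (fun _ => rfl) fun _ _ => id
  induction hi with
  | of_deficient hj hR =>
    exact fun E' hE' hcol _ => hE'.sum_row_eq_of_deficient ((hcol _).trans_lt hj) hR
  | of_pos _ hpos hR ih =>
    intro E' hE' hcol hpos'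
    refine (hE'.sum_row_le _).antisymm (not_lt.1 fun hi => ?_)
    obtain ⟨E'', hE'', hcol'', hpos'', hlt⟩ := hE'.exists_shift (hpos' _ _ hpos) hR hi
    exact hlt.ne (ih E'' hE'' (fun b => (hcol'' b).trans (hcol b))
      fun a b hab => hpos'' a b (hpos' a b hab))

end Augment

theorem IsPartialFlow.sum_confined_le (hE : IsPartialFlow R u e E)
    (hcol : ∀ j, ∑ i, E i j = e j) (S : Finset ι) : ∑ j ∈ confined R S, e j ≤ ∑ i ∈ S, u i :=
  calc ∑ j ∈ confined R S, e j
      = ∑ j ∈ confined R S, ∑ i ∈ S, E i j :=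
        sum_congr rfl fun j hj => ((hE.sum_mem_eq_sum (mem_confined.1 hj)).trans (hcol j)).symm
    _ ≤ ∑ j, ∑ i ∈ S, E i j := sum_le_sum_of_subset_of_nonneg (subset_univ _)
        fun j _ _ => sum_nonneg fun i _ => hE.nonneg i j
    _ = ∑ i ∈ S, ∑ j, E i j := sum_comm
    _ ≤ ∑ i ∈ S, u i := sum_le_sum fun i _ => hE.sum_row_le i

theorem exists_flow_of_forall_sum_confined_le (he : ∀ j, 0 ≤ e j)
    (hall : ∀ S : Finset ι, ∑ j ∈ confined R S, e j ≤ ∑ i ∈ S, u i) :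
    ∃ E, IsPartialFlow R u e E ∧ ∀ j, ∑ i, E i j = e j := by
  classical
  have hu : ∀ i, 0 ≤ u i := fun i => by simpa using (sum_nonneg fun j _ => he j).trans (hall {i})
  obtain ⟨E, hE⟩ := exists_isMaxFlow (R := R)
    ⟨fun _ _ => le_rfl, fun _ _ _ => rfl, by simpa using he, by simpa using hu⟩
  refine ⟨E, hE.toIsPartialFlow, fun j => (hE.sum_col_le j).antisymm (not_lt.1 fun hj => ?_)⟩
  set S := univ.filter (Reachable R e E)
  have hjS : j ∈ confined R S :=
    mem_confined.2 fun i hi => mem_filter.2 ⟨mem_univ _, .of_deficient hj hi⟩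
  have hout : ∀ b ∉ confined R S, ∀ a ∈ S, E a b = 0 := by
    intro b hb a ha
    refine (hE.nonneg a b).antisymm' (not_lt.1 fun hab => hb ?_)
    exact mem_confined.2 fun i hi => mem_filter.2 ⟨mem_univ _, .of_pos (mem_filter.1 ha).2 hab hi⟩
  have hfull : ∑ i ∈ S, u i = ∑ b ∈ confined R S, ∑ a, E a b := calc
    ∑ i ∈ S, u i = ∑ a ∈ S, ∑ b, E a b :=
      sum_congr rfl fun a ha => (hE.sum_row_eq_of_reachable (mem_filter.1 ha).2).symm
    _ = ∑ b, ∑ a ∈ S, E a b := sum_comm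
    _ = ∑ b ∈ confined R S, ∑ a ∈ S, E a b :=
      (sum_subset (subset_univ _) fun b _ hb => sum_eq_zero (hout b hb)).symm
    _ = ∑ b ∈ confined R S, ∑ a, E a b :=
      sum_congr rfl fun b hb => hE.sum_mem_eq_sum (mem_confined.1 hb)
  have hshort : ∑ b ∈ confined R S, ∑ a, E a b < ∑ b ∈ confined R S, e b :=
    sum_lt_sum (fun b _ => hE.sum_col_le b) ⟨j, hjS, hj⟩
  linarith [hall S]

theorem exists_flow_iff (he : ∀ j, 0 ≤ e j) :
    (∃ E, IsPartialFlow R u e E ∧ ∀ j, ∑ i, E i j = e j) ↔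
      ∀ S : Finset ι, ∑ j ∈ confined R S, e j ≤ ∑ i ∈ S, u i :=
  ⟨fun ⟨_, hE, hcol⟩ => hE.sum_confined_le hcol, exists_flow_of_forall_sum_confined_le he⟩

end Transport

theorem sup'_div_sum_le_iff {ι : Type*} [Fintype ι] [DecidableEq ι] {L : ι → ℝ}
    (hL : ∀ i, 0 < L i) {d : Finset ι → ℝ} (hd : d ∅ ≤ 0) (hS : (univ.powerset.erase ∅).Nonempty)
    {c : ℝ} : (univ.powerset.erase ∅).sup' hS (fun S => d S / ∑ i ∈ S, L i) ≤ c ↔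
      ∀ S, d S ≤ ∑ i ∈ S, c * L i := by
  simp only [sup'_le_iff, mem_erase, mem_powerset, subset_univ, and_true, ← mul_sum]
  refine forall_congr' fun S => ?_
  rcases S.eq_empty_or_nonempty with rfl | hS
  · simpa using hd
  · rw [div_le_iff₀ (sum_pos (fun i _ => hL i) hS)]
    simp [hS.ne_empty]

theorem minimal_fill_level_general (n m : ℕ) (A : Fin n → Fin m → Bool)
    (L : Fin m → ℝ) (pmax e : Fin n → ℝ)
    (hL : ∀ i, 0 < L i) (he : ∀ j, 0 ≤ e j)
    (hnb : ∀ j i, A j i = true → e j ≤ pmax j * L i)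
    (havail : ∀ j, ∃ i, A j i = true)
    (hS : (((Finset.univ : Finset (Fin m)).powerset.erase ∅)).Nonempty) :
    IsLeast {c : ℝ | 0 ≤ c ∧ ∃ E : Fin m → Fin n → ℝ,
        (∀ i j, 0 ≤ E i j) ∧ (∀ i j, A j i = false → E i j = 0) ∧
        (∀ i j, E i j ≤ pmax j * L i) ∧ (∀ j, ∑ i, E i j = e j) ∧
        (∀ i, (∑ j, E i j) / L i ≤ c)}
      (((Finset.univ : Finset (Fin m)).powerset.erase ∅).sup' hS
        (fun S => (∑ j ∈ Finset.univ.filter (fun j => ∀ i, A j i = true → i ∈ S), e j)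
          / (∑ i ∈ S, L i))) := by
  have hconfined : ∀ S, univ.filter (fun j => ∀ i, A j i = true → i ∈ S) =
      Transport.confined (fun j i => A j i = true) S := fun S => by
    ext; simp [Transport.mem_confined]
  simp only [hconfined]
  have hlevel := fun c => (sup'_div_sum_le_iff hL (c := c)
    (d := fun S => ∑ j ∈ Transport.confined (fun j i => A j i = true) S, e j)
    (by rw [Transport.confined_empty havail, sum_empty]) hS).trans
    (Transport.exists_flow_iff he).symm
  have hpmax : ∀ j, 0 ≤ pmax j := fun j => (havail j).elim fun i hi =>
    nonneg_of_mul_nonneg_left ((he j).trans (hnb j i hi)) (hL i)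
  refine ⟨⟨?_, ?_⟩, fun c ⟨_, E, hE₀, hA, _, hcol, hrow⟩ => ?_⟩
  · obtain ⟨S, hS'⟩ := hS
    exact le_sup'_of_le _ hS'
      (div_nonneg (sum_nonneg fun j _ => he j) (sum_nonneg fun i _ => (hL i).le))
  · obtain ⟨E, hE, hcol⟩ := (hlevel _).1 le_rfl
    refine ⟨E, hE.nonneg, fun i j h => hE.eq_zero_of_not_rel i j (by simp [h]), fun i j => ?_, hcol,
      fun i => (div_le_iff₀ (hL i)).2 (hE.sum_row_le i)⟩
    cases h : A j i
    · rw [hE.eq_zero_of_not_rel i j (by simp [h])]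
      exact mul_nonneg (hpmax j) (hL i).le
    · exact (hE.le i j).trans (hnb j i h)
  · exact (hlevel c).2 ⟨E, ⟨hE₀, fun i j h => hA i j (by simpa using h), fun j => (hcol j).le,
      fun i => (div_le_iff₀ (hL i)).1 (hrow i)⟩, hcol⟩

/-- The minimal uniform fill level is attained and equals the maximum, over
nonempty interval subsets `S`, of the total demand of jobs confined to `S`
divided by the total length of `S`. -/
theorem minimal_fill_level (n m : ℕ) (hm : 0 < m) (A : Fin n → Fin m → Bool)
    (L : Fin m → ℝ) (pmax e : Fin n → ℝ)
    (hL : ∀ i, 0 < L i) (he : ∀ j, 0 ≤ e j)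
    (hnb : ∀ j i, A j i = true → e j ≤ pmax j * L i)
    (havail : ∀ j, ∃ i, A j i = true)
    (hS : (((Finset.univ : Finset (Fin m)).powerset.erase ∅)).Nonempty) :
    IsLeast {c : ℝ | 0 ≤ c ∧ ∃ E : Fin m → Fin n → ℝ,
        (∀ i j, 0 ≤ E i j) ∧ (∀ i j, A j i = false → E i j = 0) ∧
        (∀ i j, E i j ≤ pmax j * L i) ∧ (∀ j, ∑ i, E i j = e j) ∧
        (∀ i, (∑ j, E i j) / L i ≤ c)}
      (((Finset.univ : Finset (Fin m)).powerset.erase ∅).sup' hS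
        (fun S => (∑ j ∈ Finset.univ.filter (fun j => ∀ i, A j i = true → i ∈ S), e j)
          / (∑ i ∈ S, L i))) :=
  minimal_fill_level_general n m A L pmax e hL he hnb havail hS
end

section
/- (Step-function structure) For the continuous-time problem where each job charges with a measurable power function x_j(t) ∈ [0, p_j^max] on [a_j, d_j] with ∫ x_j = e_j, there is an optimal aggregated profile minimizing ∫ p(t)² dt (p(t) = Σ_j x_j(t)) that is constant on each atomic interval determined by the arrival/departure breakpoints. -/
open MeasureTheory Finset

/-- Step function built from indicator functions on consecutive intervals. -/
noncomputable def stepFun (T : ℕ → ℝ) (m : ℕ) (b : ℕ → ℝ) (s : ℝ) : ℝ :=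
  ∑ i ∈ Finset.range m, (Set.Ico (T i) (T (i + 1))).indicator (fun _ => b i) s

lemma stepFun_measurable (T : ℕ → ℝ) (m : ℕ) (b : ℕ → ℝ) :
    Measurable (stepFun T m b) := by
  apply Finset.measurable_sum
  intro i _
  exact (measurable_const.indicator measurableSet_Ico)

lemma stepFun_eq_of_mem (T : ℕ → ℝ) (hT : Monotone T) (m : ℕ) (b : ℕ → ℝ)
    {i₀ : ℕ} (hi₀ : i₀ < m) {s : ℝ} (hs : s ∈ Set.Ico (T i₀) (T (i₀ + 1))) :
    stepFun T m b s = b i₀ := by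
  unfold stepFun
  rw [Finset.sum_eq_single_of_mem i₀ (Finset.mem_range.2 hi₀)]
  · simp [Set.indicator_of_mem hs]
  · intro i _ hne
    apply Set.indicator_of_notMem
    rcases lt_or_gt_of_ne hne with h | h
    · intro hmem
      exact absurd hmem.2 (not_lt.2 ((hT (Nat.succ_le_of_lt h)).trans hs.1))
    · intro hmem
      exact absurd hmem.1 (not_le.2 (hs.2.trans_le (hT (Nat.succ_le_of_lt h))))

lemma stepFun_eq_zero (T : ℕ → ℝ) (m : ℕ) (b : ℕ → ℝ) {s : ℝ}
    (h : ∀ i < m, s ∉ Set.Ico (T i) (T (i + 1))) :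
    stepFun T m b s = 0 := by
  unfold stepFun
  apply Finset.sum_eq_zero
  intro i hi
  exact Set.indicator_of_notMem (h i (Finset.mem_range.1 hi)) _

lemma stepFun_cases (T : ℕ → ℝ) (hT : Monotone T) (m : ℕ) (b : ℕ → ℝ) (s : ℝ) :
    stepFun T m b s = 0 ∨
      ∃ i, i < m ∧ s ∈ Set.Ico (T i) (T (i + 1)) ∧ stepFun T m b s = b i := by
  by_cases h : ∃ i, i < m ∧ s ∈ Set.Ico (T i) (T (i + 1))
  · obtain ⟨i, hi, hs⟩ := h
    exact Or.inr ⟨i, hi, hs, stepFun_eq_of_mem T hT m b hi hs⟩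
  · push_neg at h
    exact Or.inl (stepFun_eq_zero T m b h)

lemma stepFun_sq (T : ℕ → ℝ) (hT : Monotone T) (m : ℕ) (b : ℕ → ℝ) (s : ℝ) :
    (stepFun T m b s) ^ 2 = stepFun T m (fun i => (b i) ^ 2) s := by
  by_cases h : ∃ i, i < m ∧ s ∈ Set.Ico (T i) (T (i + 1))
  · obtain ⟨i, hi, hs⟩ := h
    rw [stepFun_eq_of_mem T hT m b hi hs, stepFun_eq_of_mem T hT m _ hi hs]
  · push_neg at h
    rw [stepFun_eq_zero T m b h, stepFun_eq_zero T m _ h]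
    ring

/-- Integral of a constant indicator on `Ico u v` over a containing interval. -/
lemma integral_indicator_Ico {u v a' d' : ℝ} (c : ℝ) (hau : a' ≤ u) (huv : u ≤ v)
    (hvd : v ≤ d') :
    (∫ s in a'..d', (Set.Ico u v).indicator (fun _ => c) s) = c * (v - u) := by
  have had : a' ≤ d' := hau.trans (huv.trans hvd)
  rw [intervalIntegral.integral_of_le had, setIntegral_indicator measurableSet_Ico,
    setIntegral_const]
  have hvol : volume (Set.Ioc a' d' ∩ Set.Ico u v) = ENNReal.ofReal (v - u) := by
    apply le_antisymm
    · calc volume (Set.Ioc a' d' ∩ Set.Ico u v) ≤ volume (Set.Ico u v) :=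
            measure_mono Set.inter_subset_right
        _ = ENNReal.ofReal (v - u) := Real.volume_Ico
    · calc ENNReal.ofReal (v - u) = volume (Set.Ioo u v) := Real.volume_Ioo.symm
        _ ≤ volume (Set.Ioc a' d' ∩ Set.Ico u v) := by
            apply measure_mono
            intro s hs
            exact ⟨⟨hau.trans_lt hs.1, hs.2.le.trans hvd⟩, ⟨hs.1.le, hs.2⟩⟩
  rw [measureReal_def, hvol, ENNReal.toReal_ofReal (by linarith)]
  rw [smul_eq_mul, mul_comm]

/-- Bounded measurable functions are interval integrable. -/
lemma intervalIntegrable_of_bounded {f : ℝ → ℝ} (hf : Measurable f) {C : ℝ}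
    (hC : ∀ s, |f s| ≤ C) (a' b' : ℝ) : IntervalIntegrable f volume a' b' := by
  rw [intervalIntegrable_iff]
  apply MeasureTheory.Measure.integrableOn_of_bounded (M := C)
  · exact ((Real.volume_Ioc).symm ▸ ENNReal.ofReal_ne_top)
  · exact hf.aestronglyMeasurable
  · exact Filter.Eventually.of_forall fun s => by simpa using hC s

lemma intervalIntegrable_indicator_Ico (u v c a' b' : ℝ) :
    IntervalIntegrable ((Set.Ico u v).indicator (fun _ => c)) volume a' b' := by
  apply intervalIntegrable_of_bounded
    (measurable_const.indicator measurableSet_Ico) (C := |c|) _ a' b'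
  intro s
  by_cases h : s ∈ Set.Ico u v <;> simp [Set.indicator_apply, h]

/-- Cauchy–Schwarz / Jensen: square of the integral is at most length times
integral of the square. -/
lemma sq_integral_le {f : ℝ → ℝ} {u v : ℝ} (huv : u ≤ v) (hf : Measurable f)
    {C : ℝ} (hC : ∀ s, |f s| ≤ C) :
    (∫ s in u..v, f s) ^ 2 ≤ (v - u) * ∫ s in u..v, (f s) ^ 2 := by
  have hintf : IntervalIntegrable f volume u v := intervalIntegrable_of_bounded hf hC u v
  have hintf2 : IntervalIntegrable (fun s => (f s) ^ 2) volume u v := by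
    apply intervalIntegrable_of_bounded (hf.pow_const 2) (C := C ^ 2)
    intro s
    rw [abs_pow]
    exact pow_le_pow_left₀ (abs_nonneg _) (hC s) 2
  set A := ∫ s in u..v, f s with hA
  set I := ∫ s in u..v, (f s) ^ 2 with hI
  rcases eq_or_lt_of_le huv with h | h
  · simp [hA, ← h]
  · have hL : 0 < v - u := by linarith
    set c : ℝ := A / (v - u) with hc
    have hexp : ∀ s, (f s - c) ^ 2 = (f s) ^ 2 - (2 * c) * f s + c ^ 2 := by
      intro s; ring
    have hkey : (∫ s in u..v, (f s - c) ^ 2) = I - 2 * c * A + c ^ 2 * (v - u) := by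
      have h1 : IntervalIntegrable (fun s => (2 * c) * f s) volume u v :=
        hintf.const_mul _
      calc (∫ s in u..v, (f s - c) ^ 2)
          = ∫ s in u..v, ((f s) ^ 2 - (2 * c) * f s + c ^ 2) := by
            simp only [hexp]
        _ = (∫ s in u..v, ((f s) ^ 2 - (2 * c) * f s)) + ∫ s in u..v, (c ^ 2 : ℝ) := by
            exact intervalIntegral.integral_add (hintf2.sub h1)
              (intervalIntegrable_const)
        _ = I - 2 * c * A + c ^ 2 * (v - u) := by
            rw [intervalIntegral.integral_sub hintf2 h1,
              intervalIntegral.integral_const_mul, intervalIntegral.integral_const]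
            rw [smul_eq_mul, mul_comm (v - u)]
    have hnn : 0 ≤ ∫ s in u..v, (f s - c) ^ 2 :=
      intervalIntegral.integral_nonneg huv (fun s _ => sq_nonneg _)
    rw [hkey] at hnn
    have hc2 : c * (v - u) = A := div_mul_cancel₀ A hL.ne'
    nlinarith [sq_nonneg c, hnn, hc2, hL]

/-- Step-function structure: in the continuous-time problem there is an optimal
aggregated power profile that is constant on each atomic interval. -/
theorem optimal_profile_step_function (n m : ℕ) (t : Fin (m + 1) → ℝ)
    (ht : StrictMono t) (a d e pmax : Fin n → ℝ)
    (had : ∀ j, a j < d j) (hp : ∀ j, 0 < pmax j) (he0 : ∀ j, 0 ≤ e j)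
    (hfe : ∀ j, e j ≤ pmax j * (d j - a j))
    (hbpa : ∀ j, ∃ k, t k = a j) (hbpd : ∀ j, ∃ k, t k = d j)
    (Feas : (Fin n → ℝ → ℝ) → Prop)
    (hFeas : Feas = fun x => ∀ j, Measurable (x j) ∧
        (∀ s, 0 ≤ x j s ∧ x j s ≤ pmax j) ∧
        (∀ s, s < a j ∨ d j < s → x j s = 0) ∧
        (∫ s in a j..d j, x j s) = e j) :
    ∃ x, Feas x ∧
      (∀ y, Feas y → (∫ s in (t 0)..(t (Fin.last m)), (∑ j, x j s) ^ 2) ≤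
        (∫ s in (t 0)..(t (Fin.last m)), (∑ j, y j s) ^ 2)) ∧
      (∀ i : Fin m, ∃ cst : ℝ, ∀ s ∈ Set.Ico (t i.castSucc) (t i.succ),
        (∑ j, x j s) = cst) := by
  subst hFeas
  classical
  -- Extended breakpoint function on ℕ
  set T : ℕ → ℝ := fun k => t ⟨min k m, by omega⟩ with hTdef
  have hTmono : Monotone T := by
    intro k l hkl
    exact ht.monotone (by simp [Fin.le_def]; omega)
  have hTt : ∀ k : Fin (m + 1), T (k : ℕ) = t k := by
    intro k
    simp only [hTdef]
    congr 1
    exact Fin.ext (by simp; omega)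
  have hT0 : T 0 = t 0 := hTt 0
  have hTm : T m = t (Fin.last m) := hTt (Fin.last m)
  have hidxlt : ∀ {k l : ℕ}, k ≤ m → l ≤ m → (T k < T l ↔ k < l) := by
    intro k l hk hl
    simp only [hTdef]
    rw [ht.lt_iff_lt, Fin.mk_lt_mk]
    omega
  have hidxle : ∀ {k l : ℕ}, k ≤ m → l ≤ m → (T k ≤ T l ↔ k ≤ l) := by
    intro k l hk hl
    constructor
    · intro h
      by_contra hc
      exact absurd ((hidxlt hl hk).2 (by omega)) (not_lt.2 h)
    · intro h; exact hTmono h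
  -- breakpoint indices of arrivals and departures
  choose ka hka using hbpa
  choose kd hkd using hbpd
  have haT : ∀ j, T (ka j : ℕ) = a j := fun j => (hTt (ka j)).trans (hka j)
  have hdT : ∀ j, T (kd j : ℕ) = d j := fun j => (hTt (kd j)).trans (hkd j)
  have hkam : ∀ j, (ka j : ℕ) ≤ m := fun j => by omega
  have hkdm : ∀ j, (kd j : ℕ) ≤ m := fun j => by omega
  have hkakd : ∀ j, (ka j : ℕ) < (kd j : ℕ) := by
    intro j
    rw [← hidxlt (hkam j) (hkdm j), haT, hdT]
    exact had j
  -- atomic interval containment predicate and lengths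
  set ins : Fin n → ℕ → Prop := fun j i => a j ≤ T i ∧ T (i + 1) ≤ d j with hins
  have hinschar : ∀ j, ∀ i < m, (ins j i ↔ (ka j : ℕ) ≤ i ∧ i + 1 ≤ (kd j : ℕ)) := by
    intro j i hi
    rw [hins]
    simp only
    rw [← haT j, ← hdT j, hidxle (hkam j) (by omega), hidxle (by omega) (hkdm j)]
  have hlenpos : ∀ i < m, 0 < T (i + 1) - T i := by
    intro i hi
    have := (hidxlt (k := i) (l := i + 1) (by omega) (by omega)).2 (by omega)
    linarith
  -- the finite-dimensional problem
  set G : (Fin n → Fin m → ℝ) → ℝ :=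
    fun c => ∑ i : Fin m, (T ((i : ℕ) + 1) - T (i : ℕ)) * (∑ j, c j i) ^ 2 with hG
  set S : Set (Fin n → Fin m → ℝ) :=
    {c | (∀ j i, 0 ≤ c j i ∧ c j i ≤ pmax j ∧ (¬ ins j (i : ℕ) → c j i = 0)) ∧
      ∀ j, (∑ i : Fin m, c j i * (T ((i : ℕ) + 1) - T (i : ℕ))) = e j} with hS
  -- demand sum identity for elements of S
  have hdemand_sum : ∀ c : Fin n → Fin m → ℝ, ∀ j,
      (∑ i ∈ Finset.range m, (if h : i < m then c j ⟨i, h⟩ else 0) * (T (i + 1) - T i))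
        = ∑ i : Fin m, c j i * (T ((i : ℕ) + 1) - T (i : ℕ)) := by
    intro c j
    rw [← Fin.sum_univ_eq_sum_range
      (fun i => (if h : i < m then c j ⟨i, h⟩ else 0) * (T (i + 1) - T i)) m]
    apply Finset.sum_congr rfl
    intro i _
    rw [dif_pos i.isLt]
  -- telescoping: total length of intervals inside [a j, d j]
  have htele : ∀ j, (∑ i ∈ Finset.range m,
      (if ins j i then (1 : ℝ) else 0) * (T (i + 1) - T i)) = d j - a j := by
    intro j
    have hstep : ∀ i ∈ Finset.range m,
        (if ins j i then (1 : ℝ) else 0) * (T (i + 1) - T i)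
          = if i ∈ Finset.Ico (ka j : ℕ) (kd j : ℕ) then T (i + 1) - T i else 0 := by
      intro i hi
      have hi' := Finset.mem_range.1 hi
      simp only [Finset.mem_Ico]
      by_cases h : ins j i
      · rw [if_pos h, if_pos (by have := (hinschar j i hi').1 h; omega), one_mul]
      · rw [if_neg h, if_neg (by intro hc; exact h ((hinschar j i hi').2 (by omega))),
          zero_mul]
    rw [Finset.sum_congr rfl hstep, Finset.sum_ite_mem]
    have hrange : Finset.range m ∩ Finset.Ico (ka j : ℕ) (kd j : ℕ)
        = Finset.Ico (ka j : ℕ) (kd j : ℕ) := by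
      rw [Finset.inter_comm, Finset.range_eq_Ico, Finset.Ico_inter_Ico]
      simp [Nat.min_eq_left (hkdm j)]
    rw [hrange, Finset.sum_Ico_eq_sub _ (le_of_lt (hkakd j)),
      Finset.sum_range_sub T, Finset.sum_range_sub T, haT j, hdT j]
    ring
  -- S is nonempty: uniform spreading
  have hSne : S.Nonempty := by
    refine ⟨fun j i => if ins j (i : ℕ) then e j / (d j - a j) else 0, ?_, ?_⟩
    · intro j i
      have hda : 0 < d j - a j := by have := had j; linarith
      refine ⟨?_, ?_, ?_⟩
      · show (0 : ℝ) ≤ if ins j (i : ℕ) then e j / (d j - a j) else 0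
        split
        · exact div_nonneg (he0 j) hda.le
        · exact le_refl 0
      · show (if ins j (i : ℕ) then e j / (d j - a j) else 0) ≤ pmax j
        split
        · rw [div_le_iff₀ hda]; exact hfe j
        · exact (hp j).le
      · intro h
        show (if ins j (i : ℕ) then e j / (d j - a j) else 0) = 0
        rw [if_neg h]
    · intro j
      have hda : 0 < d j - a j := by have := had j; linarith
      have h2 := htele j
      rw [← Fin.sum_univ_eq_sum_range
        (fun i => (if ins j i then (1:ℝ) else 0) * (T (i + 1) - T i)) m] at h2
      show (∑ i : Fin m, (if ins j (i : ℕ) then e j / (d j - a j) else 0)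
              * (T ((i : ℕ) + 1) - T (i : ℕ))) = e j
      calc ∑ i : Fin m, (if ins j (i : ℕ) then e j / (d j - a j) else 0)
              * (T ((i : ℕ) + 1) - T (i : ℕ))
          = (e j / (d j - a j)) * ∑ i : Fin m,
              (if ins j (i : ℕ) then (1 : ℝ) else 0) * (T ((i : ℕ) + 1) - T (i : ℕ)) := by
            rw [Finset.mul_sum]
            apply Finset.sum_congr rfl
            intro i _
            split <;> ring
        _ = (e j / (d j - a j)) * (d j - a j) := by rw [h2]
        _ = e j := div_mul_cancel₀ _ hda.ne'
  -- S is compact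
  have hScompact : IsCompact S := by
    have hsub : S ⊆ Set.Icc (0 : Fin n → Fin m → ℝ) (fun j _ => pmax j) := by
      intro c hc
      constructor
      · intro j; intro i; exact (hc.1 j i).1
      · intro j; intro i; exact (hc.1 j i).2.1
    have hclosed : IsClosed S := by
      have h1 : S = {c : Fin n → Fin m → ℝ |
            ∀ j i, 0 ≤ c j i ∧ c j i ≤ pmax j ∧ (¬ ins j (i : ℕ) → c j i = 0)}
          ∩ {c | ∀ j, (∑ i : Fin m, c j i * (T ((i : ℕ) + 1) - T (i : ℕ))) = e j} := rfl
      rw [h1]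
      apply IsClosed.inter
      · rw [Set.setOf_forall]
        apply isClosed_iInter; intro j
        rw [Set.setOf_forall]
        apply isClosed_iInter; intro i
        have hev : Continuous fun c : Fin n → Fin m → ℝ => c j i :=
          (continuous_apply i).comp (continuous_apply j)
        rw [Set.setOf_and, Set.setOf_and]
        apply IsClosed.inter (isClosed_le continuous_const hev)
        apply IsClosed.inter (isClosed_le hev continuous_const)
        by_cases h : ins j (i : ℕ)
        · have : {c : Fin n → Fin m → ℝ | ¬ ins j (i : ℕ) → c j i = 0} = Set.univ := by
            ext c
            simp only [Set.mem_setOf_eq, Set.mem_univ, iff_true]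
            intro hc; exact absurd h hc
          rw [this]; exact isClosed_univ
        · have : {c : Fin n → Fin m → ℝ | ¬ ins j (i : ℕ) → c j i = 0}
              = {c | c j i = 0} := by
            ext c; simp [h]
          rw [this]
          exact isClosed_eq hev continuous_const
      · rw [Set.setOf_forall]
        apply isClosed_iInter; intro j
        apply isClosed_eq _ continuous_const
        apply continuous_finset_sum
        intro i _
        exact (((continuous_apply i).comp (continuous_apply j) :
          Continuous fun c : Fin n → Fin m → ℝ => c j i)).mul continuous_const
    exact IsCompact.of_isClosed_subset isCompact_Icc hclosed hsub
  have hGcont : Continuous G := by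
    apply continuous_finset_sum
    intro i _
    apply Continuous.mul continuous_const
    apply Continuous.pow
    apply continuous_finset_sum
    intro j _
    exact (continuous_apply i).comp (continuous_apply j)
  obtain ⟨c, hcS, hcmin⟩ := hScompact.exists_isMinOn hSne hGcont.continuousOn
  -- the candidate solution
  set eb : (Fin m → ℝ) → ℕ → ℝ := fun r k => if h : k < m then r ⟨k, h⟩ else 0 with heb
  set x : Fin n → ℝ → ℝ := fun j => stepFun T m (eb (c j)) with hx
  -- aggregated profile of x is a step function
  have hagg : ∀ s, (∑ j, x j s) = stepFun T m (fun i => ∑ j, eb (c j) i) s := by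
    intro s
    simp only [hx, stepFun]
    rw [Finset.sum_comm]
    apply Finset.sum_congr rfl
    intro i _
    by_cases h : s ∈ Set.Ico (T i) (T (i + 1)) <;> simp [Set.indicator_apply, h]
  -- objective value of a step profile
  have hstepobj : ∀ b : ℕ → ℝ,
      (∫ s in (T 0)..(T m), (stepFun T m b s) ^ 2)
        = ∑ i ∈ Finset.range m, (b i) ^ 2 * (T (i + 1) - T i) := by
    intro b
    have hsq : (fun s => (stepFun T m b s) ^ 2)
        = fun s => stepFun T m (fun i => (b i) ^ 2) s :=
      funext (stepFun_sq T hTmono m b)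
    rw [hsq]
    unfold stepFun
    rw [intervalIntegral.integral_finset_sum
      (fun i _ => intervalIntegrable_indicator_Ico _ _ _ _ _)]
    apply Finset.sum_congr rfl
    intro i hi
    have hi' := Finset.mem_range.1 hi
    exact integral_indicator_Ico _ (hTmono (Nat.zero_le i))
      (hTmono (by omega)) (hTmono (by omega : i + 1 ≤ m))
  -- feasibility of x
  have hxFeas : ∀ j, Measurable (x j) ∧
      (∀ s, 0 ≤ x j s ∧ x j s ≤ pmax j) ∧
      (∀ s, s < a j ∨ d j < s → x j s = 0) ∧
      (∫ s in a j..d j, x j s) = e j := by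
    intro j
    have hcb := hcS.1 j
    refine ⟨stepFun_measurable T m _, ?_, ?_, ?_⟩
    · intro s
      rcases stepFun_cases T hTmono m (eb (c j)) s with h | ⟨i, hi, hs, h⟩
      · rw [hx]; simp only; rw [h]
        exact ⟨le_refl 0, (hp j).le⟩
      · rw [hx]; simp only; rw [h, heb]; simp only
        rw [dif_pos hi]
        exact ⟨(hcb ⟨i, hi⟩).1, (hcb ⟨i, hi⟩).2.1⟩
    · intro s hout
      rcases stepFun_cases T hTmono m (eb (c j)) s with h | ⟨i, hi, hs, h⟩
      · exact h
      · rw [hx]; simp only; rw [h, heb]; simp only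
        rw [dif_pos hi]
        apply (hcb ⟨i, hi⟩).2.2
        intro hinsi
        rcases hout with hlt | hgt
        · exact absurd (hinsi.1.trans hs.1) (not_le.2 hlt)
        · exact absurd (hs.2.trans_le hinsi.2) (not_lt.2 hgt.le)
    · show (∫ s in a j..d j, stepFun T m (eb (c j)) s) = e j
      unfold stepFun
      rw [intervalIntegral.integral_finset_sum
        (fun i _ => intervalIntegrable_indicator_Ico _ _ _ _ _)]
      have hterm : ∀ i ∈ Finset.range m,
          (∫ s in a j..d j, (Set.Ico (T i) (T (i + 1))).indicator
              (fun _ => eb (c j) i) s)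
            = eb (c j) i * (T (i + 1) - T i) := by
        intro i hi
        have hi' := Finset.mem_range.1 hi
        by_cases hin : ins j i
        · exact integral_indicator_Ico _ hin.1 (hTmono (by omega)) hin.2
        · have hz : eb (c j) i = 0 := by
            rw [heb]; simp only; rw [dif_pos hi']
            exact (hcb ⟨i, hi'⟩).2.2 hin
          rw [hz, zero_mul]
          simp
      rw [Finset.sum_congr rfl hterm]
      have heq : ∀ i ∈ Finset.range m,
          eb (c j) i * (T (i + 1) - T i)
            = (if h : i < m then c j ⟨i, h⟩ else 0) * (T (i + 1) - T i) := by
        intro i hi; rfl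
      rw [Finset.sum_congr rfl heq, hdemand_sum c j]
      exact hcS.2 j
  -- objective of x equals G c
  have hxobj : (∫ s in (t 0)..(t (Fin.last m)), (∑ j, x j s) ^ 2) = G c := by
    rw [← hT0, ← hTm]
    have h1 : (fun s => (∑ j, x j s) ^ 2)
        = fun s => (stepFun T m (fun i => ∑ j, eb (c j) i) s) ^ 2 := by
      funext s; rw [hagg s]
    rw [h1, hstepobj]
    rw [← Fin.sum_univ_eq_sum_range
      (fun i => (∑ j, eb (c j) i) ^ 2 * (T (i + 1) - T i)) m]
    rw [hG]
    apply Finset.sum_congr rfl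
    intro i _
    have h2 : ∀ j, eb (c j) (i : ℕ) = c j i := by
      intro j; rw [heb]; simp only; rw [dif_pos i.isLt]
    simp only [h2]
    ring
  refine ⟨x, hxFeas, ?_, ?_⟩
  · -- optimality
    intro y hy
    have hybd : ∀ j s, |y j s| ≤ pmax j := by
      intro j s
      have h1 := ((hy j).2.1 s).1
      have h2 := ((hy j).2.1 s).2
      rw [abs_le]
      constructor
      · have := hp j; linarith
      · exact h2
    have hyint : ∀ j u v, IntervalIntegrable (y j) volume u v :=
      fun j u v => intervalIntegrable_of_bounded (hy j).1 (hybd j) u v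
    set cy : Fin n → Fin m → ℝ := fun j i =>
      (∫ s in T (i : ℕ)..T ((i : ℕ) + 1), y j s) / (T ((i : ℕ) + 1) - T (i : ℕ))
      with hcy
    -- cy is feasible for the finite-dimensional problem
    have hcyS : cy ∈ S := by
      constructor
      · intro j i
        have hlen := hlenpos (i : ℕ) i.isLt
        have huv : T (i : ℕ) ≤ T ((i : ℕ) + 1) := by linarith
        have hnn : 0 ≤ ∫ s in T (i : ℕ)..T ((i : ℕ) + 1), y j s :=
          intervalIntegral.integral_nonneg huv (fun s _ => ((hy j).2.1 s).1)
        have hub : (∫ s in T (i : ℕ)..T ((i : ℕ) + 1), y j s)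
            ≤ pmax j * (T ((i : ℕ) + 1) - T (i : ℕ)) := by
          calc (∫ s in T (i : ℕ)..T ((i : ℕ) + 1), y j s)
              ≤ ∫ _ in T (i : ℕ)..T ((i : ℕ) + 1), pmax j :=
                intervalIntegral.integral_mono_on huv (hyint j _ _)
                  intervalIntegrable_const (fun s _ => ((hy j).2.1 s).2)
            _ = pmax j * (T ((i : ℕ) + 1) - T (i : ℕ)) := by
                rw [intervalIntegral.integral_const, smul_eq_mul, mul_comm]
        refine ⟨div_nonneg hnn (by linarith), ?_, ?_⟩
        · show (∫ s in T (i : ℕ)..T ((i : ℕ) + 1), y j s)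
              / (T ((i : ℕ) + 1) - T (i : ℕ)) ≤ pmax j
          rw [div_le_iff₀ hlen]
          exact hub
        · intro hni
          show (∫ s in T (i : ℕ)..T ((i : ℕ) + 1), y j s)
              / (T ((i : ℕ) + 1) - T (i : ℕ)) = 0
          have hzero : (∫ s in T (i : ℕ)..T ((i : ℕ) + 1), y j s) = 0 := by
            rw [intervalIntegral.integral_of_le huv,
              MeasureTheory.integral_Ioc_eq_integral_Ioo]
            apply setIntegral_eq_zero_of_forall_eq_zero
            intro s hs
            rcases not_and_or.1 hni with h | h
            · have hlt : (i : ℕ) < (ka j : ℕ) :=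
                (hidxlt (le_of_lt i.isLt) (hkam j)).1
                  (by rw [haT]; exact not_le.1 h)
              have hva : T ((i : ℕ) + 1) ≤ a j := by
                rw [← haT j]; exact hTmono (by omega)
              exact (hy j).2.2.1 s (Or.inl (lt_of_lt_of_le hs.2 hva))
            · have hlt : (kd j : ℕ) < (i : ℕ) + 1 :=
                (hidxlt (hkdm j) (by omega : (i : ℕ) + 1 ≤ m)).1
                  (by rw [hdT]; exact not_le.1 h)
              have hdu : d j ≤ T (i : ℕ) := by
                rw [← hdT j]; exact hTmono (by omega)
              exact (hy j).2.2.1 s (Or.inr (lt_of_le_of_lt hdu hs.1))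
          rw [hzero, zero_div]
      · intro j
        have hTa : T 0 ≤ a j := by rw [← haT j]; exact hTmono (Nat.zero_le _)
        have hTd : d j ≤ T m := by rw [← hdT j]; exact hTmono (hkdm j)
        have had' := (had j).le
        have hz1 : (∫ s in (T 0)..a j, y j s) = 0 := by
          rw [intervalIntegral.integral_of_le hTa,
            MeasureTheory.integral_Ioc_eq_integral_Ioo]
          exact setIntegral_eq_zero_of_forall_eq_zero
            (fun s hs => (hy j).2.2.1 s (Or.inl hs.2))
        have hz2 : (∫ s in d j..T m, y j s) = 0 := by
          rw [intervalIntegral.integral_of_le hTd,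
            MeasureTheory.integral_Ioc_eq_integral_Ioo]
          exact setIntegral_eq_zero_of_forall_eq_zero
            (fun s hs => (hy j).2.2.1 s (Or.inr hs.1))
        have hsplit2 : (∫ s in a j..d j, y j s) + (∫ s in d j..T m, y j s)
            = ∫ s in a j..T m, y j s :=
          intervalIntegral.integral_add_adjacent_intervals (hyint j _ _) (hyint j _ _)
        have hsplit1 : (∫ s in (T 0)..a j, y j s) + (∫ s in a j..T m, y j s)
            = ∫ s in (T 0)..T m, y j s :=
          intervalIntegral.integral_add_adjacent_intervals (hyint j _ _) (hyint j _ _)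
        have htot : (∫ s in (T 0)..T m, y j s) = e j := by
          have := (hy j).2.2.2
          rw [← hsplit1, ← hsplit2, hz1, hz2, this]
          ring
        show (∑ i : Fin m,
            (∫ s in T (i : ℕ)..T ((i : ℕ) + 1), y j s) / (T ((i : ℕ) + 1) - T (i : ℕ))
              * (T ((i : ℕ) + 1) - T (i : ℕ))) = e j
        calc (∑ i : Fin m,
            (∫ s in T (i : ℕ)..T ((i : ℕ) + 1), y j s) / (T ((i : ℕ) + 1) - T (i : ℕ))
              * (T ((i : ℕ) + 1) - T (i : ℕ)))
            = ∑ i : Fin m, ∫ s in T (i : ℕ)..T ((i : ℕ) + 1), y j s := by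
              apply Finset.sum_congr rfl
              intro i _
              exact div_mul_cancel₀ _ (hlenpos (i : ℕ) i.isLt).ne'
          _ = ∑ i ∈ Finset.range m, ∫ s in T i..T (i + 1), y j s :=
              Fin.sum_univ_eq_sum_range (fun k => ∫ s in T k..T (k + 1), y j s) m
          _ = ∫ s in (T 0)..T m, y j s :=
              intervalIntegral.sum_integral_adjacent_intervals
                (fun k _ => hyint j _ _)
          _ = e j := htot
    -- Jensen: G cy is at most the objective of y
    have hfm : Measurable fun s => ∑ j, y j s :=
      Finset.measurable_sum _ (fun j _ => (hy j).1)
    have hfb : ∀ s, |∑ j, y j s| ≤ ∑ j, pmax j := by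
      intro s
      calc |∑ j, y j s| ≤ ∑ j, |y j s| := Finset.abs_sum_le_sum_abs _ _
        _ ≤ ∑ j, pmax j := Finset.sum_le_sum (fun j _ => hybd j s)
    have hf2int : ∀ u v, IntervalIntegrable (fun s => (∑ j, y j s) ^ 2) volume u v := by
      intro u v
      apply intervalIntegrable_of_bounded (hfm.pow_const 2) (C := (∑ j, pmax j) ^ 2)
      intro s
      rw [abs_pow]
      exact pow_le_pow_left₀ (abs_nonneg _) (hfb s) 2
    have hGcy : G cy ≤ ∫ s in (T 0)..T m, (∑ j, y j s) ^ 2 := by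
      rw [hG]
      calc ∑ i : Fin m, (T ((i : ℕ) + 1) - T (i : ℕ)) * (∑ j, cy j i) ^ 2
          ≤ ∑ i : Fin m, ∫ s in T (i : ℕ)..T ((i : ℕ) + 1), (∑ j, y j s) ^ 2 := by
            apply Finset.sum_le_sum
            intro i _
            have hlen := hlenpos (i : ℕ) i.isLt
            have huv : T (i : ℕ) ≤ T ((i : ℕ) + 1) := by linarith
            have hsum : (∑ j, cy j i)
                = (∫ s in T (i : ℕ)..T ((i : ℕ) + 1), ∑ j, y j s)
                  / (T ((i : ℕ) + 1) - T (i : ℕ)) := by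
              rw [intervalIntegral.integral_finset_sum (fun j _ => hyint j _ _)]
              rw [hcy, ← Finset.sum_div]
            have hkey := sq_integral_le huv hfm hfb
            rw [hsum, div_pow]
            set A := ∫ s in T (i : ℕ)..T ((i : ℕ) + 1), ∑ j, y j s with hA
            set L := T ((i : ℕ) + 1) - T (i : ℕ) with hL
            have heq : L * (A ^ 2 / L ^ 2) = A ^ 2 / L := by
              field_simp
            rw [heq, div_le_iff₀ hlen]
            linarith [hkey]
        _ = ∑ i ∈ Finset.range m, ∫ s in T i..T (i + 1), (∑ j, y j s) ^ 2 :=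
            Fin.sum_univ_eq_sum_range
              (fun k => ∫ s in T k..T (k + 1), (∑ j, y j s) ^ 2) m
        _ = ∫ s in (T 0)..T m, (∑ j, y j s) ^ 2 :=
            intervalIntegral.sum_integral_adjacent_intervals (fun k _ => hf2int _ _)
    calc (∫ s in (t 0)..(t (Fin.last m)), (∑ j, x j s) ^ 2)
        = G c := hxobj
      _ ≤ G cy := isMinOn_iff.1 hcmin cy hcyS
      _ ≤ ∫ s in (T 0)..T m, (∑ j, y j s) ^ 2 := hGcy
      _ = ∫ s in (t 0)..(t (Fin.last m)), (∑ j, y j s) ^ 2 := by rw [hT0, hTm]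
  · -- step structure
    intro i
    refine ⟨∑ j, c j i, ?_⟩
    intro s hs
    have h1 : t i.castSucc = T (i : ℕ) := by
      rw [← hTt i.castSucc]; rfl
    have h2 : t i.succ = T ((i : ℕ) + 1) := by
      rw [← hTt i.succ]; rfl
    rw [h1, h2] at hs
    rw [hagg s, stepFun_eq_of_mem T hTmono m _ i.isLt hs]
    apply Finset.sum_congr rfl
    intro j _
    simp only [heb]
    rw [dif_pos i.isLt]
end
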